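/- arXiv:1712.00860 — 7 statements merged into one kernel-verified Lean document; each statement's English description precedes it below -/
import Mathlib

section
/- Let θ be a probability measure on ℕ with finite entropy H(θ) = -∑_{n∈ℕ} θ(n) log θ(n) < ∞, and let θ^{⋆k} denote the k-fold convolution of θ with respect to addition on ℕ. Then lim_{k→∞} H(θ^{⋆k})/k = 0. -/
open Filter Real

namespace Stmt3

/-- Additive convolution of two (sub)probability mass functions on `ℕ`:
`(a ⋆ b)(m) = ∑_{i+j=m} a(i)·b(j)`. -/
noncomputable def conv (a b : ℕ → ℝ) : ℕ → ℝ := fun m =>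
  ∑ i ∈ Finset.range (m + 1), a i * b (m - i)

/-- The `k`-fold additive convolution `θ^{⋆k}` on `ℕ` (with `θ^{⋆0} = δ_0`). -/
noncomputable def iterConv (θ : ℕ → ℝ) : ℕ → ℕ → ℝ
  | 0 => fun m => if m = 0 then 1 else 0
  | k + 1 => conv (iterConv θ k) θ

/-- The Shannon entropy `H(ν) = -∑_n ν(n) log ν(n)` (with the convention `0·log 0 = 0`,
which holds automatically since `Real.log 0 = 0`). -/
noncomputable def entropy (ν : ℕ → ℝ) : ℝ := -∑' n, ν n * Real.log (ν n)

section Aux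

variable {α β γ δ : Type*}

/-- pushforward of a mass function along a map -/
noncomputable def push [DecidableEq β] (f : α → β) (p : α → ℝ) : β → ℝ :=
  fun y => ∑' x, if f x = y then p x else 0

/-- entropy as a sum of `negMulLog` -/
noncomputable def ent (p : α → ℝ) : ℝ := ∑' x, Real.negMulLog (p x)

/-- probability mass function with finite entropy -/
structure IsPM (p : α → ℝ) : Prop where
  nonneg : ∀ x, 0 ≤ p x
  summable : Summable p
  total : ∑' x, p x = 1
  hent : Summable fun x => Real.negMulLog (p x)

lemma IsPM.le_one {p : α → ℝ} (h : IsPM p) (x : α) : p x ≤ 1 :=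
  h.total ▸ Summable.le_tsum h.summable x (fun j _ => h.nonneg j)

lemma IsPM.nml_nonneg {p : α → ℝ} (h : IsPM p) (x : α) : 0 ≤ Real.negMulLog (p x) :=
  Real.negMulLog_nonneg (h.nonneg x) (h.le_one x)

lemma IsPM.ent_nonneg {p : α → ℝ} (h : IsPM p) : 0 ≤ ent p :=
  tsum_nonneg h.nml_nonneg

/- swap machinery -/

lemma summable_curry (F : α → β → ℝ) (h0 : ∀ a b, 0 ≤ F a b)
    (hs : ∀ a, Summable (F a)) (hS : Summable fun a => ∑' b, F a b) :
    Summable (fun z : α × β => F z.1 z.2) :=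
  (summable_prod_of_nonneg (fun z => h0 z.1 z.2)).mpr ⟨hs, hS⟩

lemma swap_summable (F : α → β → ℝ) (h0 : ∀ a b, 0 ≤ F a b)
    (hs : ∀ a, Summable (F a)) (hS : Summable fun a => ∑' b, F a b) :
    Summable (fun b => ∑' a, F a b) := by
  have h : Summable (fun z : β × α => F z.2 z.1) := (summable_curry F h0 hs hS).prod_symm
  exact ((summable_prod_of_nonneg (fun z => h0 z.2 z.1)).mp h).2

lemma col_summable (F : α → β → ℝ) (h0 : ∀ a b, 0 ≤ F a b)
    (hs : ∀ a, Summable (F a)) (hS : Summable fun a => ∑' b, F a b) :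
    ∀ b, Summable (fun a => F a b) := by
  have h : Summable (fun z : β × α => F z.2 z.1) := (summable_curry F h0 hs hS).prod_symm
  exact ((summable_prod_of_nonneg (fun z => h0 z.2 z.1)).mp h).1

lemma tsum_swap (F : α → β → ℝ) (h0 : ∀ a b, 0 ≤ F a b)
    (hs : ∀ a, Summable (F a)) (hS : Summable fun a => ∑' b, F a b) :
    ∑' b, ∑' a, F a b = ∑' a, ∑' b, F a b := by
  have hc := summable_curry F h0 hs hS
  have hsw : Summable (fun z : β × α => F z.2 z.1) := hc.prod_symm
  have h1 : ∑' (z : β × α), F z.2 z.1 = ∑' (b : β) (a : α), F a b :=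
    Summable.tsum_prod' hsw (col_summable F h0 hs hS)
  have h2 : ∑' (z : α × β), F z.1 z.2 = ∑' (a : α) (b : β), F a b := Summable.tsum_prod' hc hs
  have h3 : ∑' (z : β × α), F z.2 z.1 = ∑' (z : α × β), F z.1 z.2 :=
    (Equiv.prodComm β α).tsum_eq (fun z : α × β => F z.1 z.2)
  rw [← h1, h3, h2]


/- basic push lemmas -/

section Push
variable [DecidableEq β] {f : α → β} {p : α → ℝ}

lemma ite_nonneg' (hp0 : ∀ x, 0 ≤ p x) : ∀ a b, (0:ℝ) ≤ if f a = b then p a else 0 := by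
  intro a b; split <;> simp [hp0 a]

lemma row_summable' : ∀ a, Summable (fun b => if f a = b then p a else 0) := by
  intro a
  exact summable_of_ne_finset_zero (s := {f a}) (by intro b hb; simp at hb; simp [Ne.symm hb])

lemma row_tsum' : ∀ a, ∑' b, (if f a = b then p a else 0) = p a := by
  intro a
  rw [tsum_eq_single (f a) (by intro b hb; simp [Ne.symm hb])]
  simp

lemma col_sum' (hp0 : ∀ x, 0 ≤ p x) (hps : Summable p) (b : β) :
    Summable (fun x => if f x = b then p x else 0) :=
  Summable.of_nonneg_of_le (fun x => by split <;> simp [hp0 x])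
    (fun x => by split <;> simp [hp0 x]) hps

lemma rows_sum_summable (hps : Summable p) :
    Summable (fun a => ∑' b, if f a = b then p a else 0) := by
  simpa only [row_tsum'] using hps

lemma push_summable (hp0 : ∀ x, 0 ≤ p x) (hps : Summable p) : Summable (push f p) :=
  swap_summable _ (ite_nonneg' hp0) row_summable' (rows_sum_summable hps)

lemma push_tsum (hp0 : ∀ x, 0 ≤ p x) (hps : Summable p) : ∑' b, push f p b = ∑' x, p x := by
  unfold push
  rw [tsum_swap _ (ite_nonneg' hp0) row_summable' (rows_sum_summable hps)]
  simp only [row_tsum']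

lemma push_nonneg (hp0 : ∀ x, 0 ≤ p x) (b : β) : 0 ≤ push f p b :=
  tsum_nonneg (fun x => by split <;> simp [hp0 x])

lemma le_push (hp0 : ∀ x, 0 ≤ p x) (hps : Summable p) (a : α) : p a ≤ push f p (f a) := by
  have := Summable.le_tsum (col_sum' (f := f) hp0 hps (f a)) a
    (fun j _ => by split <;> simp [hp0 j])
  simpa [push] using this


/-- pushforward of a PM is a PM of no larger entropy. -/
lemma push_ent (hp : IsPM p) (f : α → β) : IsPM (push f p) ∧ ent (push f p) ≤ ent p := by
  classical
  set q := push f p with hq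
  have hq1 : ∀ b, q b ≤ 1 := by
    intro b
    have h := Summable.le_tsum (push_summable (f := f) hp.nonneg hp.summable) b
      (fun j _ => push_nonneg hp.nonneg j)
    rw [push_tsum hp.nonneg hp.summable, hp.total] at h
    exact h
  have hq0 : ∀ b, 0 ≤ q b := push_nonneg hp.nonneg
  -- pointwise entropy bound
  have key : ∀ b, Real.negMulLog (q b) ≤ ∑' a, if f a = b then Real.negMulLog (p a) else 0 := by
    intro b
    have hqb : q b = ∑' x, if f x = b then p x else 0 := rfl
    have h1 : Real.negMulLog (q b) = ∑' x, (-Real.log (q b)) * (if f x = b then p x else 0) := by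
      rw [Summable.tsum_mul_left _ (col_sum' hp.nonneg hp.summable b), ← hqb]
      simp [Real.negMulLog]; ring
    rw [h1]
    apply Summable.tsum_le_tsum _ ((col_sum' hp.nonneg hp.summable b).mul_left _)
      (Summable.of_nonneg_of_le (fun x => by split <;> simp [hp.nml_nonneg x])
        (fun x => by split <;> simp [hp.nml_nonneg x]) hp.hent)
    intro x
    by_cases hx : f x = b
    · rw [if_pos hx, if_pos hx]
      rcases eq_or_lt_of_le (hp.nonneg x) with h | h
      · simp [← h, Real.negMulLog]
      · have hle : p x ≤ q b := by
          rw [← hx]; exact le_push hp.nonneg hp.summable x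
        have hlog : Real.log (p x) ≤ Real.log (q b) := Real.log_le_log h hle
        have hmul := mul_le_mul_of_nonneg_left (neg_le_neg hlog) h.le
        rw [Real.negMulLog]
        nlinarith
    · simp [hx]
  have hGs : Summable (fun b => ∑' a, if f a = b then Real.negMulLog (p a) else 0) := by
    apply swap_summable _ (fun a b => by split <;> simp [hp.nml_nonneg a])
    · intro a
      exact summable_of_ne_finset_zero (s := {f a}) (by intro b hb; simp at hb; simp [Ne.symm hb])
    · apply Summable.congr hp.hent
      intro a
      rw [tsum_eq_single (f a) (by intro b hb; simp [Ne.symm hb])]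
      simp
  have hGt : ∑' b, (∑' a, if f a = b then Real.negMulLog (p a) else 0) = ent p := by
    rw [tsum_swap _ (fun a b => by split <;> simp [hp.nml_nonneg a])
      (fun a => summable_of_ne_finset_zero (s := {f a})
        (by intro b hb; simp at hb; simp [Ne.symm hb]))
      (by
        apply Summable.congr hp.hent
        intro a
        rw [tsum_eq_single (f a) (by intro b hb; simp [Ne.symm hb])]
        simp)]
    unfold ent
    congr 1
    funext a
    rw [tsum_eq_single (f a) (by intro b hb; simp [Ne.symm hb])]
    simp
  have hnml0 : ∀ b, 0 ≤ Real.negMulLog (q b) := fun b => Real.negMulLog_nonneg (hq0 b) (hq1 b)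
  have hqent : Summable (fun b => Real.negMulLog (q b)) :=
    Summable.of_nonneg_of_le hnml0 key hGs
  refine ⟨⟨hq0, push_summable hp.nonneg hp.summable,
    (push_tsum hp.nonneg hp.summable).trans hp.total, hqent⟩, ?_⟩
  calc ent q ≤ ∑' b, (∑' a, if f a = b then Real.negMulLog (p a) else 0) :=
        Summable.tsum_le_tsum key hqent hGs
    _ = ent p := hGt

end Push

lemma push_id [DecidableEq α] {p : α → ℝ} {g : α → α} (hg : ∀ x, g x = x) :
    push g p = p := by
  funext n
  unfold push
  rw [tsum_eq_single n (by intro x hx; rw [if_neg]; rw [hg x]; exact hx)]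
  simp [hg n]



/- product measures -/

noncomputable def pmul (p : α → ℝ) (q : β → ℝ) : α × β → ℝ := fun z => p z.1 * q z.2

section Pmul
variable {p : α → ℝ} {q : β → ℝ}

lemma pmul_summable (hp0 : ∀ x, 0 ≤ p x) (hps : Summable p)
    (hq0 : ∀ y, 0 ≤ q y) (hqs : Summable q) : Summable (pmul p q) := by
  apply summable_curry (fun a b => p a * q b)
    (fun a b => mul_nonneg (hp0 a) (hq0 b)) (fun a => hqs.mul_left _)
  simp only [tsum_mul_left]
  exact hps.mul_right _

lemma pmul_tsum (hp0 : ∀ x, 0 ≤ p x) (hps : Summable p)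
    (hq0 : ∀ y, 0 ≤ q y) (hqs : Summable q) :
    ∑' z, pmul p q z = (∑' x, p x) * (∑' y, q y) := by
  rw [Summable.tsum_prod' (pmul_summable hp0 hps hq0 hqs) (fun a => hqs.mul_left (p a))]
  simp only [pmul, tsum_mul_left]
  rw [tsum_mul_right]

lemma pmul_PM (hp : IsPM p) (hq : IsPM q) :
    IsPM (pmul p q) ∧ ent (pmul p q) = ent p + ent q := by
  have hnml : (fun z : α × β => Real.negMulLog (pmul p q z)) =
      (fun z => Real.negMulLog (p z.1) * q z.2 + p z.1 * Real.negMulLog (q z.2)) := by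
    funext z
    rw [pmul, Real.negMulLog_mul]
    ring
  have hS1 : Summable (fun z : α × β => Real.negMulLog (p z.1) * q z.2) := by
    apply summable_curry (fun a b => Real.negMulLog (p a) * q b)
      (fun a b => mul_nonneg (hp.nml_nonneg a) (hq.nonneg b)) (fun a => hq.summable.mul_left _)
    simp only [tsum_mul_left]
    exact hp.hent.mul_right _
  have hS2 : Summable (fun z : α × β => p z.1 * Real.negMulLog (q z.2)) := by
    apply summable_curry (fun a b => p a * Real.negMulLog (q b))
      (fun a b => mul_nonneg (hp.nonneg a) (hq.nml_nonneg b)) (fun a => hq.hent.mul_left _)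
    simp only [tsum_mul_left]
    exact hp.summable.mul_right _
  have hT1 : ∑' z : α × β, Real.negMulLog (p z.1) * q z.2 = ent p := by
    rw [Summable.tsum_prod' hS1 (fun a => hq.summable.mul_left (Real.negMulLog (p a)))]
    simp only [tsum_mul_left, hq.total, mul_one]
    rfl
  have hT2 : ∑' z : α × β, p z.1 * Real.negMulLog (q z.2) = ent q := by
    rw [Summable.tsum_prod' hS2 (fun a => hq.hent.mul_left (p a))]
    simp only [tsum_mul_left]
    rw [tsum_mul_right, hp.total, one_mul]
    rfl
  have hent' : Summable (fun z => Real.negMulLog (pmul p q z)) := by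
    rw [hnml]; exact hS1.add hS2
  constructor
  · exact ⟨fun z => mul_nonneg (hp.nonneg z.1) (hq.nonneg z.2),
      pmul_summable hp.nonneg hp.summable hq.nonneg hq.summable,
      by rw [pmul_tsum hp.nonneg hp.summable hq.nonneg hq.summable, hp.total, hq.total, one_mul],
      hent'⟩
  · unfold ent
    rw [hnml, Summable.tsum_add hS1 hS2, hT1, hT2]
    rfl

end Pmul


/- composition of pushforwards -/

lemma push_comp [DecidableEq β] [DecidableEq γ] (f : α → β) (g : β → γ) {p : α → ℝ}
    (hp0 : ∀ x, 0 ≤ p x) (hps : Summable p) :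
    push g (push f p) = push (fun x => g (f x)) p := by
  funext y
  have hrow : ∀ a, Summable (fun b => if f a = b then (if g b = y then p a else 0) else 0) :=
    fun a => summable_of_ne_finset_zero (s := {f a})
      (by intro b hb; simp at hb; simp [Ne.symm hb])
  have hrowt : ∀ a, (∑' b, if f a = b then (if g b = y then p a else 0) else 0)
      = (if g (f a) = y then p a else 0) := by
    intro a
    rw [tsum_eq_single (f a) (by intro b hb; simp [Ne.symm hb])]
    simp
  have h0 : ∀ a b, (0:ℝ) ≤ if f a = b then (if g b = y then p a else 0) else 0 := by
    intro a b; split <;> [skip; simp]; split <;> simp [hp0 a]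
  have hS : Summable (fun a => ∑' b, if f a = b then (if g b = y then p a else 0) else 0) := by
    simp only [hrowt]
    exact Summable.of_nonneg_of_le (fun a => by split <;> simp [hp0 a])
      (fun a => by split <;> simp [hp0 a]) hps
  have key : push g (push f p) y
      = ∑' b, ∑' a, if f a = b then (if g b = y then p a else 0) else 0 := by
    unfold push
    congr 1
    funext b
    by_cases hb : g b = y
    · rw [if_pos hb]
      congr 1
      funext a
      by_cases hab : f a = b <;> simp [hab, hb]
    · rw [if_neg hb]
      symm
      convert tsum_zero with a
      by_cases hab : f a = b <;> simp [hab, hb]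
  rw [key, tsum_swap _ h0 hrow hS]
  unfold push
  congr 1
  funext a
  exact hrowt a

/- convolution as pushforward -/

lemma conv_eq_push (a b : ℕ → ℝ) :
    conv a b = push (fun w : ℕ × ℕ => w.1 + w.2) (pmul a b) := by
  funext m
  unfold push pmul conv
  rw [tsum_eq_sum (s := (Finset.range (m + 1)).image fun i => (i, m - i)) ?h0]
  · rw [Finset.sum_image (by intro x _ y _ h; exact (Prod.mk.injEq _ _ _ _ ▸ h).1)]
    apply Finset.sum_congr rfl
    intro i hi
    simp only [Finset.mem_range] at hi
    rw [if_pos (show (i, m - i).1 + (i, m - i).2 = m by simp; omega)]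
  · intro w hw
    rw [if_neg]
    intro h
    replace h : w.1 + w.2 = m := h
    apply hw
    simp only [Finset.mem_image, Finset.mem_range]
    refine ⟨w.1, by omega, ?_⟩
    have h2 : m - w.1 = w.2 := by omega
    rw [h2]

lemma push_pmul [DecidableEq γ] [DecidableEq δ] (f : α → γ) (g : β → δ)
    {p : α → ℝ} {q : β → ℝ} (hp0 : ∀ x, 0 ≤ p x) (hps : Summable p)
    (hq0 : ∀ y, 0 ≤ q y) (hqs : Summable q) :
    push (Prod.map f g) (pmul p q) = pmul (push f p) (push g q) := by
  funext c
  have hterm : ∀ z : α × β,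
      (if Prod.map f g z = c then p z.1 * q z.2 else 0)
      = (if f z.1 = c.1 then p z.1 else 0) * (if g z.2 = c.2 then q z.2 else 0) := by
    intro z
    by_cases h1 : f z.1 = c.1 <;> by_cases h2 : g z.2 = c.2 <;>
      simp [Prod.map, Prod.ext_iff, h1, h2]
  show ∑' z : α × β, (if Prod.map f g z = c then p z.1 * q z.2 else 0) = _
  simp only [hterm]
  have h1s : Summable (fun x => if f x = c.1 then p x else 0) := col_sum' hp0 hps c.1
  have h2s : Summable (fun y => if g y = c.2 then q y else 0) := col_sum' hq0 hqs c.2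
  have := pmul_tsum (p := fun x => if f x = c.1 then p x else 0)
    (q := fun y => if g y = c.2 then q y else 0)
    (fun x => by split <;> simp [hp0 x]) h1s
    (fun y => by split <;> simp [hq0 y]) h2s
  exact this


/- point mass -/

lemma delta_PM [DecidableEq α] (x0 : α) :
    IsPM (fun x => if x = x0 then (1:ℝ) else 0)
      ∧ ent (fun x => if x = x0 then (1:ℝ) else 0) = 0 := by
  have hnml : (fun x => Real.negMulLog (if x = x0 then (1:ℝ) else 0)) = fun _ => 0 := by
    funext x
    split <;> simp
  refine ⟨⟨fun x => by split <;> norm_num, ?_, tsum_ite_eq x0 1, ?_⟩, ?_⟩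
  · exact summable_of_ne_finset_zero (s := {x0}) (by intro b hb; simp at hb; simp [hb])
  · rw [hnml]; exact summable_zero
  · unfold ent; rw [hnml]; exact tsum_zero

end Aux

/- iterated convolutions -/

lemma conv_PM {a b : ℕ → ℝ} (ha : IsPM a) (hb : IsPM b) :
    IsPM (conv a b) ∧ ent (conv a b) ≤ ent a + ent b := by
  rw [conv_eq_push]
  obtain ⟨hpm, hpe⟩ := pmul_PM ha hb
  obtain ⟨h1, h2⟩ := push_ent hpm (fun w : ℕ × ℕ => w.1 + w.2)
  exact ⟨h1, h2.trans_eq hpe⟩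

lemma iter_PM {θ : ℕ → ℝ} (hθ : IsPM θ) :
    ∀ k, IsPM (iterConv θ k) ∧ ent (iterConv θ k) ≤ k * ent θ := by
  intro k
  induction k with
  | zero =>
    obtain ⟨h1, h2⟩ := delta_PM (0 : ℕ)
    exact ⟨h1, by rw [show iterConv θ 0 = fun m => if m = 0 then (1:ℝ) else 0 from rfl, h2]; simp⟩
  | succ k ih =>
    obtain ⟨h1, h2⟩ := conv_PM ih.1 hθ
    refine ⟨h1, h2.trans ?_⟩
    have := ih.2
    push_cast
    nlinarith [hθ.ent_nonneg]

noncomputable def conv2 (σ τ : ℕ × ℕ → ℝ) : ℕ × ℕ → ℝ :=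
  push (fun w : (ℕ × ℕ) × (ℕ × ℕ) => w.1 + w.2) (pmul σ τ)

noncomputable def iterConv2 (ρ : ℕ × ℕ → ℝ) : ℕ → ℕ × ℕ → ℝ
  | 0 => fun u => if u = 0 then 1 else 0
  | k + 1 => conv2 (iterConv2 ρ k) ρ

lemma conv2_PM {σ τ : ℕ × ℕ → ℝ} (hσ : IsPM σ) (hτ : IsPM τ) : IsPM (conv2 σ τ) :=
  (push_ent (pmul_PM hσ hτ).1 _).1

lemma iter2_PM {ρ : ℕ × ℕ → ℝ} (hρ : IsPM ρ) : ∀ k, IsPM (iterConv2 ρ k) := by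
  intro k
  induction k with
  | zero => exact (delta_PM (0 : ℕ × ℕ)).1
  | succ k ih => exact conv2_PM ih hρ

/-- pushing a 2D convolution forward along an additive map gives a 1D convolution -/
lemma push_conv2 (g : ℕ × ℕ → ℕ) (hg : ∀ u v, g (u + v) = g u + g v)
    {σ τ : ℕ × ℕ → ℝ} (hσ : IsPM σ) (hτ : IsPM τ) :
    push g (conv2 σ τ) = conv (push g σ) (push g τ) := by
  unfold conv2
  have hpm := (pmul_PM hσ hτ).1
  rw [push_comp _ _ hpm.nonneg hpm.summable]
  rw [conv_eq_push]
  rw [← push_pmul g g hσ.nonneg hσ.summable hτ.nonneg hτ.summable]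
  rw [push_comp _ _ hpm.nonneg hpm.summable]
  show push (fun x : (ℕ × ℕ) × (ℕ × ℕ) => g (x.1 + x.2)) (pmul σ τ) = _
  have hfun : (fun x : (ℕ × ℕ) × (ℕ × ℕ) => g (x.1 + x.2))
      = (fun x : (ℕ × ℕ) × (ℕ × ℕ) => (Prod.map g g x).1 + (Prod.map g g x).2) := by
    funext w
    simp only [Prod.map_fst, Prod.map_snd]
    exact hg w.1 w.2
  rw [hfun]

lemma push_iter (g : ℕ × ℕ → ℕ) (hg : ∀ u v, g (u + v) = g u + g v) (hg0 : g 0 = 0)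
    {ρ : ℕ × ℕ → ℝ} (hρ : IsPM ρ) :
    ∀ k, push g (iterConv2 ρ k) = iterConv (push g ρ) k := by
  intro k
  induction k with
  | zero =>
    funext m
    show (∑' u : ℕ × ℕ, if g u = m then (if u = 0 then (1:ℝ) else 0) else 0)
      = (if m = 0 then 1 else 0)
    rw [tsum_eq_single (0 : ℕ × ℕ) (by intro u hu; split <;> simp [hu])]
    rw [hg0]
    by_cases hm : m = 0 <;> simp [hm, eq_comm]
  | succ k ih =>
    show push g (conv2 (iterConv2 ρ k) ρ) = conv (iterConv (push g ρ) k) (push g ρ)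
    rw [push_conv2 g hg (iter2_PM hρ k) hρ, ih]


/- subadditivity of entropy for a joint distribution -/

lemma ent_pair_le {α β : Type*} [DecidableEq α] [DecidableEq β]
    (σ : α × β → ℝ) (hσ : IsPM σ) :
    ent σ ≤ ent (push Prod.fst σ) + ent (push Prod.snd σ) := by
  set A := push (Prod.fst : α × β → α) σ with hA
  set B := push (Prod.snd : α × β → β) σ with hB
  obtain ⟨hApm, _⟩ := push_ent hσ (Prod.fst : α × β → α)
  obtain ⟨hBpm, _⟩ := push_ent hσ (Prod.snd : α × β → β)
  have h0 : (0 : α × β → ℝ) ≤ σ := fun z => hσ.nonneg z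
  have hrow : ∀ a, Summable fun b => σ (a, b) :=
    ((summable_prod_of_nonneg h0).mp hσ.summable).1
  have hsw : Summable (fun z : β × α => σ (z.2, z.1)) := by
    have := hσ.summable.prod_symm
    exact this.congr (fun z => rfl)
  have hcol : ∀ b, Summable fun a => σ (a, b) :=
    ((summable_prod_of_nonneg (fun z : β × α => hσ.nonneg (z.2, z.1))).mp hsw).1
  -- marginal formulas
  have hAa : ∀ a, A a = ∑' b, σ (a, b) := by
    intro a
    have hsum_ite : Summable (fun z : α × β => if z.1 = a then σ z else 0) :=
      Summable.of_nonneg_of_le (fun z => by split <;> simp [hσ.nonneg z])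
        (fun z => by split <;> simp [hσ.nonneg z]) hσ.summable
    have h1 : A a = ∑' (x : α) (b : β), if x = a then σ (x, b) else 0 :=
      Summable.tsum_prod' hsum_ite (fun x => Summable.of_nonneg_of_le
        (fun b => by split <;> simp [hσ.nonneg (x, b)])
        (fun b => by split <;> simp [hσ.nonneg (x, b)]) (hrow x))
    rw [h1, tsum_eq_single a (by
      intro x hx
      have : ∀ b : β, (if x = a then σ (x, b) else 0) = 0 := fun b => if_neg hx
      simp only [this, tsum_zero])]
    simp
  have hBb : ∀ b, B b = ∑' a, σ (a, b) := by
    intro b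
    have hsum_ite : Summable (fun z : α × β => if z.2 = b then σ z else 0) :=
      Summable.of_nonneg_of_le (fun z => by split <;> simp [hσ.nonneg z])
        (fun z => by split <;> simp [hσ.nonneg z]) hσ.summable
    have h1 : B b = ∑' (x : α) (y : β), if y = b then σ (x, y) else 0 :=
      Summable.tsum_prod' hsum_ite (fun x => Summable.of_nonneg_of_le
        (fun y => by split <;> simp [hσ.nonneg (x, y)])
        (fun y => by split <;> simp [hσ.nonneg (x, y)]) (hrow x))
    rw [h1]
    congr 1
    funext x
    rw [tsum_eq_single b (by intro y hy; exact if_neg hy)]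
    simp
  have hσA : ∀ z : α × β, σ z ≤ A z.1 := by
    intro z
    rw [hAa]
    have := Summable.le_tsum (hrow z.1) z.2 (fun j _ => hσ.nonneg (z.1, j))
    simpa using this
  have hσB : ∀ z : α × β, σ z ≤ B z.2 := by
    intro z
    rw [hBb]
    have := Summable.le_tsum (hcol z.2) z.1 (fun j _ => hσ.nonneg (j, z.2))
    simpa using this
  -- pointwise bound
  have key : ∀ z : α × β, Real.negMulLog (σ z) ≤
      (pmul A B z - σ z) + (-(σ z * Real.log (A z.1)) + -(σ z * Real.log (B z.2))) := by
    intro z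
    rcases eq_or_lt_of_le (hσ.nonneg z) with h | h
    · rw [← h]
      simp only [Real.negMulLog_zero, zero_mul, neg_zero, sub_zero, add_zero]
      exact mul_nonneg (hApm.nonneg z.1) (hBpm.nonneg z.2)
    · have hA1 : 0 < A z.1 := h.trans_le (hσA z)
      have hB1 : 0 < B z.2 := h.trans_le (hσB z)
      have hlog : Real.log (A z.1 * B z.2 / σ z) ≤ A z.1 * B z.2 / σ z - 1 :=
        Real.log_le_sub_one_of_pos (by positivity)
      have hlogeq : Real.log (A z.1 * B z.2 / σ z)
          = Real.log (A z.1) + Real.log (B z.2) - Real.log (σ z) := by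
        rw [Real.log_div (by positivity) h.ne', Real.log_mul hA1.ne' hB1.ne']
      have h2 : σ z * (Real.log (A z.1) + Real.log (B z.2) - Real.log (σ z))
          ≤ A z.1 * B z.2 - σ z := by
        rw [← hlogeq]
        have hm := mul_le_mul_of_nonneg_left hlog h.le
        have heq : σ z * (A z.1 * B z.2 / σ z - 1) = A z.1 * B z.2 - σ z := by
          field_simp
        linarith
      rw [mul_sub, mul_add] at h2
      simp only [Real.negMulLog, pmul]
      linarith
  -- summability of the dominating function
  have hms : Summable (pmul A B) :=
    pmul_summable hApm.nonneg hApm.summable hBpm.nonneg hBpm.summable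
  have hmt : ∑' z, pmul A B z = 1 := by
    rw [pmul_tsum hApm.nonneg hApm.summable hBpm.nonneg hBpm.summable,
      hApm.total, hBpm.total, one_mul]
  have ht1nn : ∀ a b, (0:ℝ) ≤ -(σ (a, b) * Real.log (A a)) := by
    intro a b
    rcases eq_or_lt_of_le (hApm.nonneg a) with hz | hz
    · have : σ (a, b) = 0 := le_antisymm (by rw [hz]; exact hσA (a, b)) (hσ.nonneg _)
      simp [this]
    · have hle : Real.log (A a) ≤ 0 := Real.log_nonpos hz.le (hApm.le_one a)
      have := mul_nonpos_of_nonneg_of_nonpos (hσ.nonneg (a, b)) hle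
      linarith
  have ht1S : (fun a => ∑' b, -(σ (a, b) * Real.log (A a))) = fun a => Real.negMulLog (A a) := by
    funext a
    rw [tsum_neg, tsum_mul_right, ← hAa a, Real.negMulLog]
    ring
  have ht1s : Summable (fun z : α × β => -(σ z * Real.log (A z.1))) := by
    have := summable_curry (fun a b => -(σ (a, b) * Real.log (A a))) ht1nn
      (fun a => ((hrow a).mul_right _).neg) (ht1S ▸ hApm.hent)
    exact this.congr (fun z => rfl)
  have ht1t : ∑' z : α × β, -(σ z * Real.log (A z.1)) = ent A := by
    rw [Summable.tsum_prod' ht1s (fun a => ((hrow a).mul_right (Real.log (A a))).neg)]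
    calc ∑' (a : α) (b : β), -(σ (a, b) * Real.log (A a))
        = ∑' a, Real.negMulLog (A a) := by rw [ht1S]
      _ = ent A := rfl
  have ht2nn : ∀ b a, (0:ℝ) ≤ -(σ (a, b) * Real.log (B b)) := by
    intro b a
    rcases eq_or_lt_of_le (hBpm.nonneg b) with hz | hz
    · have : σ (a, b) = 0 := le_antisymm (by rw [hz]; exact hσB (a, b)) (hσ.nonneg _)
      simp [this]
    · have hle : Real.log (B b) ≤ 0 := Real.log_nonpos hz.le (hBpm.le_one b)
      have := mul_nonpos_of_nonneg_of_nonpos (hσ.nonneg (a, b)) hle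
      linarith
  have ht2S : (fun b => ∑' a, -(σ (a, b) * Real.log (B b))) = fun b => Real.negMulLog (B b) := by
    funext b
    rw [tsum_neg, tsum_mul_right, ← hBb b, Real.negMulLog]
    ring
  have ht2curry : Summable (fun w : β × α => -(σ (w.2, w.1) * Real.log (B w.1))) := by
    have := summable_curry (fun b a => -(σ (a, b) * Real.log (B b))) ht2nn
      (fun b => ((hcol b).mul_right _).neg) (ht2S ▸ hBpm.hent)
    exact this.congr (fun z => rfl)
  have ht2s : Summable (fun z : α × β => -(σ z * Real.log (B z.2))) := by
    have := ht2curry.prod_symm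
    exact this.congr (fun z => rfl)
  have ht2t : ∑' z : α × β, -(σ z * Real.log (B z.2)) = ent B := by
    have he : ∑' z : α × β, -(σ z * Real.log (B z.2))
        = ∑' w : β × α, -(σ (w.2, w.1) * Real.log (B w.1)) := by
      exact ((Equiv.prodComm β α).tsum_eq
        (fun z : α × β => -(σ z * Real.log (B z.2)))).symm
    rw [he, Summable.tsum_prod' ht2curry (fun b => ((hcol b).mul_right (Real.log (B b))).neg)]
    calc ∑' (b : β) (a : α), -(σ (a, b) * Real.log (B b))
        = ∑' b, Real.negMulLog (B b) := by rw [ht2S]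
      _ = ent B := rfl
  have hG : Summable (fun z : α × β =>
      (pmul A B z - σ z) + (-(σ z * Real.log (A z.1)) + -(σ z * Real.log (B z.2)))) :=
    (hms.sub hσ.summable).add (ht1s.add ht2s)
  calc ent σ ≤ ∑' z : α × β,
        ((pmul A B z - σ z) + (-(σ z * Real.log (A z.1)) + -(σ z * Real.log (B z.2)))) :=
        Summable.tsum_le_tsum key hσ.hent hG
    _ = (∑' z, (pmul A B z - σ z))
        + ∑' z : α × β, (-(σ z * Real.log (A z.1)) + -(σ z * Real.log (B z.2))) :=
        Summable.tsum_add (hms.sub hσ.summable) (ht1s.add ht2s)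
    _ = ((∑' z, pmul A B z) - ∑' z, σ z) + ((∑' z : α × β, -(σ z * Real.log (A z.1)))
        + ∑' z : α × β, -(σ z * Real.log (B z.2))) := by
        rw [Summable.tsum_sub hms hσ.summable, Summable.tsum_add ht1s ht2s]
    _ = ent A + ent B := by
        rw [hmt, hσ.total, ht1t, ht2t]
        ring


/- entropy bound for finitely supported measures on ℕ -/

lemma ent_le_log {p : ℕ → ℝ} (hp : IsPM p) (M : ℕ) (hM : 1 ≤ M)
    (hsupp : ∀ n, M ≤ n → p n = 0) : ent p ≤ Real.log M := by
  have hM0 : (0:ℝ) < (M:ℝ) := by exact_mod_cast hM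
  have h1 : ent p = ∑ n ∈ Finset.range M, Real.negMulLog (p n) := by
    apply tsum_eq_sum
    intro n hn
    rw [hsupp n (by simpa using hn)]
    simp
  have h2 : ∑ n ∈ Finset.range M, p n = 1 := by
    rw [← tsum_eq_sum (L := SummationFilter.unconditional ℕ) (fun n hn => hsupp n (by simpa using hn))]
    exact hp.total
  have key : ∀ n, Real.negMulLog (p n) ≤ 1 / M - p n + p n * Real.log M := by
    intro n
    rcases eq_or_lt_of_le (hp.nonneg n) with h | h
    · rw [← h]
      have h0 : (0:ℝ) ≤ 1 / M := by positivity
      simpa using h0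
    · have hlog : Real.log (1 / M / p n) ≤ 1 / M / p n - 1 :=
        Real.log_le_sub_one_of_pos (by positivity)
      have hlogeq : Real.log (1 / M / p n) = -Real.log M - Real.log (p n) := by
        rw [Real.log_div (by positivity) h.ne', Real.log_div one_ne_zero hM0.ne',
          Real.log_one]
        ring
      have hm := mul_le_mul_of_nonneg_left hlog h.le
      have heq : p n * (1 / M / p n - 1) = 1 / M - p n := by field_simp
      rw [heq, hlogeq, mul_sub] at hm
      rw [Real.negMulLog]
      nlinarith
  calc ent p ≤ ∑ n ∈ Finset.range M, (1 / M - p n + p n * Real.log M) := by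
        rw [h1]; exact Finset.sum_le_sum (fun n _ => key n)
    _ = (M : ℝ) * (1 / M) - 1 + Real.log M := by
        rw [Finset.sum_add_distrib, Finset.sum_sub_distrib, ← Finset.sum_mul, h2,
          Finset.sum_const, Finset.card_range]
        simp
    _ = Real.log M := by field_simp; ring

/- support lemmas -/

lemma conv_supp {a b : ℕ → ℝ} {A B : ℕ} (ha : ∀ n, A ≤ n → a n = 0)
    (hb : ∀ n, B ≤ n → b n = 0) : ∀ n, A + B ≤ n → conv a b n = 0 := by
  intro n hn
  unfold conv
  apply Finset.sum_eq_zero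
  intro i hi
  simp only [Finset.mem_range] at hi
  rcases le_or_gt A i with h | h
  · rw [ha i h, zero_mul]
  · rw [hb (n - i) (by omega), mul_zero]

lemma iter_supp {a : ℕ → ℝ} {A : ℕ} (ha : ∀ n, A ≤ n → a n = 0) :
    ∀ k n, k * A + 1 ≤ n → iterConv a k n = 0 := by
  intro k
  induction k with
  | zero =>
    intro n hn
    show (if n = 0 then (1:ℝ) else 0) = 0
    rw [if_neg (by omega)]
  | succ k ih =>
    intro n hn
    show conv (iterConv a k) a n = 0
    exact conv_supp ih ha n (by rw [Nat.succ_mul] at hn; omega)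

/- the tail measure has small entropy for large N -/

lemma tail_ent_small {θ : ℕ → ℝ} (hθ : IsPM θ) {ε : ℝ} (hε : 0 < ε) :
    ∃ N : ℕ, 1 ≤ N ∧ ent (push (fun n => if n < N then 0 else n) θ) < ε := by
  -- c N = ∑_{n<N} θ n  tends to 1
  have hc : Tendsto (fun N => Real.negMulLog (∑ n ∈ Finset.range N, θ n)) atTop (nhds 0) := by
    have h1 : Tendsto (fun N => ∑ n ∈ Finset.range N, θ n) atTop (nhds 1) := by
      have := hθ.summable.hasSum
      rw [hθ.total] at this
      exact this.tendsto_sum_nat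
    have h2 := (Real.continuous_negMulLog.tendsto 1).comp h1
    simpa [Function.comp_def] using h2
  -- tail entropy sum tends to 0
  have hT : Tendsto (fun N => ∑' m, if N ≤ m then Real.negMulLog (θ m) else 0)
      atTop (nhds 0) := by
    have hTeq : ∀ N : ℕ, (∑' m, if N ≤ m then Real.negMulLog (θ m) else 0)
        = (∑' m, Real.negMulLog (θ m)) - ∑ m ∈ Finset.range N, Real.negMulLog (θ m) := by
      intro N
      have hinj : Function.Injective (fun n : ℕ => n + N) := add_left_injective N
      have hsupp : Function.support (fun m => if N ≤ m then Real.negMulLog (θ m) else 0)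
          ⊆ Set.range (fun n : ℕ => n + N) := by
        intro m hm
        simp only [Function.mem_support] at hm
        by_cases h : N ≤ m
        · exact ⟨m - N, show m - N + N = m by omega⟩
        · exact absurd (if_neg h) hm
      have h1 := hinj.tsum_eq hsupp
      have h2 : (∑' n : ℕ, if N ≤ n + N then Real.negMulLog (θ (n + N)) else 0)
          = ∑' n : ℕ, Real.negMulLog (θ (n + N)) := by
        congr 1
        funext n
        rw [if_pos (Nat.le_add_left N n)]
      rw [← h1, h2]
      have h3 := Summable.sum_add_tsum_nat_add N hθ.hent
      linarith
    simp only [hTeq]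
    have := (HasSum.tendsto_sum_nat hθ.hent.hasSum)
    have h4 := Tendsto.sub (tendsto_const_nhds
      (x := ∑' m, Real.negMulLog (θ m)) (f := atTop)) this
    simpa using h4
  have hsum := hc.add hT
  rw [add_zero] at hsum
  have hev := (hsum.eventually (gt_mem_nhds hε)).and (eventually_ge_atTop 1)
  obtain ⟨N, hN, hN1⟩ := hev.exists
  refine ⟨N, hN1, ?_⟩
  -- compute ent of the pushforward
  set zf : ℕ → ℕ := fun n => if n < N then 0 else n with hzf
  set Z := push zf θ with hZ
  have hZval : ∀ m, Real.negMulLog (Z m)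
      = (if m = 0 then Real.negMulLog (∑ n ∈ Finset.range N, θ n) else 0)
        + (if N ≤ m then Real.negMulLog (θ m) else 0) := by
    intro m
    rcases Nat.eq_zero_or_pos m with hm | hm
    · subst hm
      have : Z 0 = ∑ n ∈ Finset.range N, θ n := by
        show (∑' x, if zf x = 0 then θ x else 0) = _
        rw [tsum_eq_sum (s := Finset.range N) (by
          intro x hx
          simp only [Finset.mem_range] at hx
          rw [if_neg]
          simp only [hzf]
          rw [if_neg (by omega)]
          omega)]
        apply Finset.sum_congr rfl
        intro x hx
        simp only [Finset.mem_range] at hx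
        rw [if_pos]
        simp only [hzf]
        rw [if_pos hx]
      rw [this, if_pos rfl, if_neg (by omega), add_zero]
    · by_cases hNm : N ≤ m
      · have : Z m = θ m := by
          show (∑' x, if zf x = m then θ x else 0) = _
          rw [tsum_eq_single m (by
            intro x hx
            rw [if_neg]
            simp only [hzf]
            split <;> omega)]
          rw [if_pos]
          simp only [hzf]
          rw [if_neg (by omega)]
        rw [this, if_neg (by omega), if_pos hNm, zero_add]
      · have : Z m = 0 := by
          show (∑' x, if zf x = m then θ x else 0) = 0
          convert tsum_zero with x
          rw [if_neg]
          simp only [hzf]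
          split <;> omega
        rw [this, if_neg (by omega), if_neg hNm]
        simp
  have hs1 : Summable (fun m : ℕ =>
      if m = 0 then Real.negMulLog (∑ n ∈ Finset.range N, θ n) else 0) :=
    summable_of_ne_finset_zero (s := {0}) (by intro m hm; simp at hm; simp [hm])
  have hs2 : Summable (fun m => if N ≤ m then Real.negMulLog (θ m) else 0) :=
    Summable.of_nonneg_of_le (fun m => by split <;> simp [hθ.nml_nonneg m])
      (fun m => by split <;> simp [hθ.nml_nonneg m]) hθ.hent
  have : ent Z = Real.negMulLog (∑ n ∈ Finset.range N, θ n)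
      + ∑' m, (if N ≤ m then Real.negMulLog (θ m) else 0) := by
    unfold ent
    calc ∑' m, Real.negMulLog (Z m)
        = ∑' m, ((if m = 0 then Real.negMulLog (∑ n ∈ Finset.range N, θ n) else 0)
          + (if N ≤ m then Real.negMulLog (θ m) else 0)) := by
          congr 1; funext m; exact hZval m
      _ = _ := by
          rw [Summable.tsum_add hs1 hs2, tsum_ite_eq 0]
  rw [this]
  exact hN

lemma log_div_tendsto (N : ℕ) (hN : 1 ≤ N) :
    Tendsto (fun k : ℕ => Real.log ((k * N + 1 : ℕ) : ℝ) / k) atTop (nhds 0) := by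
  have hbase : Tendsto (fun x : ℝ => Real.log x / x) atTop (nhds 0) := by
    have := Real.tendsto_pow_log_div_mul_add_atTop 1 0 1 one_ne_zero
    simpa using this
  have harg : Tendsto (fun k : ℕ => (((k * N + 1 : ℕ)) : ℝ)) atTop atTop := by
    apply tendsto_natCast_atTop_atTop.comp
    apply tendsto_atTop_mono _ tendsto_id
    intro k
    calc k = k * 1 := (mul_one k).symm
      _ ≤ k * N := Nat.mul_le_mul_left k hN
      _ ≤ k * N + 1 := Nat.le_succ _
  have hg : Tendsto (fun k : ℕ =>
      ((N : ℝ) + 1) * (Real.log ((k * N + 1 : ℕ) : ℝ) / ((k * N + 1 : ℕ) : ℝ)))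
      atTop (nhds 0) := by
    have := (hbase.comp harg).const_mul ((N : ℝ) + 1)
    simpa using this
  apply squeeze_zero' ?_ ?_ hg
  · filter_upwards [eventually_ge_atTop 1] with k hk
    have hk0 : (0:ℝ) < k := by exact_mod_cast hk
    apply div_nonneg _ hk0.le
    apply Real.log_nonneg
    have : (1:ℕ) ≤ k * N + 1 := by omega
    exact_mod_cast this
  · filter_upwards [eventually_ge_atTop 1] with k hk
    have hk0 : (0:ℝ) < k := by exact_mod_cast hk
    have hX0 : (0:ℝ) < ((k * N + 1 : ℕ) : ℝ) := by positivity
    have hlog0 : 0 ≤ Real.log ((k * N + 1 : ℕ) : ℝ) := by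
      apply Real.log_nonneg
      have : (1:ℕ) ≤ k * N + 1 := by omega
      exact_mod_cast this
    have h1 : (1:ℝ) / k ≤ ((N : ℝ) + 1) / ((k * N + 1 : ℕ) : ℝ) := by
      rw [div_le_div_iff₀ hk0 hX0]
      have h2 : (k * N + 1 : ℕ) ≤ (N + 1) * k := by
        have := Nat.one_le_iff_ne_zero.mp hk
        nlinarith [hk]
      push_cast
      have h3 : ((k * N + 1 : ℕ) : ℝ) ≤ ((N : ℝ) + 1) * k := by
        exact_mod_cast h2
      push_cast at h3
      linarith
    calc Real.log ((k * N + 1 : ℕ) : ℝ) / k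
        = Real.log ((k * N + 1 : ℕ) : ℝ) * (1 / k) := by ring
      _ ≤ Real.log ((k * N + 1 : ℕ) : ℝ) * (((N : ℝ) + 1) / ((k * N + 1 : ℕ) : ℝ)) :=
          mul_le_mul_of_nonneg_left h1 hlog0
      _ = ((N : ℝ) + 1) * (Real.log ((k * N + 1 : ℕ) : ℝ) / ((k * N + 1 : ℕ) : ℝ)) := by
          ring

/-- If a probability measure `θ` on `ℕ` has finite entropy, then each convolution power
`θ^{⋆k}` has finite entropy and `H(θ^{⋆k})/k → 0` as `k → ∞`. -/
theorem entropy_iterConv_div_tendsto_zero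
    (θ : ℕ → ℝ) (hθ0 : ∀ n, 0 ≤ θ n) (hθ1 : HasSum θ 1)
    (hH : Summable (fun n => θ n * Real.log (θ n))) :
    (∀ k, Summable (fun n => iterConv θ k n * Real.log (iterConv θ k n))) ∧
      Tendsto (fun k : ℕ => entropy (iterConv θ k) / k) atTop (nhds 0) := by
  classical
  have hθ : IsPM θ := ⟨hθ0, hθ1.summable, hθ1.tsum_eq, by
    apply hH.neg.congr
    intro n
    rw [Real.negMulLog]; ring⟩
  have hsummable : ∀ k, Summable fun n => iterConv θ k n * Real.log (iterConv θ k n) := by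
    intro k
    apply ((iter_PM hθ k).1.hent.neg).congr
    intro n
    rw [Real.negMulLog]; ring
  refine ⟨hsummable, ?_⟩
  have hent_eq : ∀ k, entropy (iterConv θ k) = ent (iterConv θ k) := by
    intro k
    unfold entropy ent
    rw [← tsum_neg]
    congr 1
    funext n
    rw [Real.negMulLog]; ring
  rw [Metric.tendsto_atTop]
  intro ε hε
  obtain ⟨N, hN1, hNent⟩ := tail_ent_small hθ (half_pos hε)
  set yf : ℕ → ℕ := fun n => if n < N then n else 0 with hyf
  set zf : ℕ → ℕ := fun n => if n < N then 0 else n with hzf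
  set pair : ℕ → ℕ × ℕ := fun n => (yf n, zf n) with hpair
  set ρ : ℕ × ℕ → ℝ := push pair θ with hρdef
  have hρ : IsPM ρ := (push_ent hθ pair).1
  set Y : ℕ → ℝ := push yf θ with hYdef
  set Z : ℕ → ℝ := push zf θ with hZdef
  have hY : IsPM Y := (push_ent hθ yf).1
  have hZ : IsPM Z := (push_ent hθ zf).1
  have hfstρ : push Prod.fst ρ = Y := by
    rw [hρdef, push_comp pair Prod.fst hθ.nonneg hθ.summable]
  have hsndρ : push Prod.snd ρ = Z := by
    rw [hρdef, push_comp pair Prod.snd hθ.nonneg hθ.summable]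
  have haddρ : push (fun u : ℕ × ℕ => u.1 + u.2) ρ = θ := by
    rw [hρdef, push_comp pair (fun u : ℕ × ℕ => u.1 + u.2) hθ.nonneg hθ.summable]
    apply push_id
    intro n
    show yf n + zf n = n
    simp only [hyf, hzf]
    by_cases h : n < N <;> simp [h]
  have hadd : ∀ u v : ℕ × ℕ,
      (fun u : ℕ × ℕ => u.1 + u.2) (u + v) = (fun u : ℕ × ℕ => u.1 + u.2) u
        + (fun u : ℕ × ℕ => u.1 + u.2) v := by
    intro u v
    show (u + v).1 + (u + v).2 = (u.1 + u.2) + (v.1 + v.2)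
    simp [Prod.fst_add, Prod.snd_add]
    omega
  have hbound : ∀ k : ℕ,
      ent (iterConv θ k) ≤ Real.log ((k * N + 1 : ℕ) : ℝ) + k * ent Z := by
    intro k
    have hτ : IsPM (iterConv2 ρ k) := iter2_PM hρ k
    have h1 : iterConv θ k = push (fun u : ℕ × ℕ => u.1 + u.2) (iterConv2 ρ k) := by
      rw [push_iter _ hadd rfl hρ k, haddρ]
    have h2 : ent (iterConv θ k) ≤ ent (iterConv2 ρ k) := by
      rw [h1]
      exact (push_ent hτ _).2
    have h3 := ent_pair_le _ hτ
    have h4 : push Prod.fst (iterConv2 ρ k) = iterConv Y k := by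
      rw [push_iter Prod.fst (fun u v => rfl) rfl hρ k, hfstρ]
    have h5 : push Prod.snd (iterConv2 ρ k) = iterConv Z k := by
      rw [push_iter Prod.snd (fun u v => rfl) rfl hρ k, hsndρ]
    have hYsupp : ∀ n, N ≤ n → Y n = 0 := by
      intro n hn
      show (∑' x, if yf x = n then θ x else 0) = 0
      convert tsum_zero with x
      rw [if_neg]
      simp only [hyf]
      split <;> omega
    have h6 : ent (iterConv Y k) ≤ Real.log ((k * N + 1 : ℕ) : ℝ) := by
      apply ent_le_log (iter_PM hY k).1 (k * N + 1) (by omega)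
      intro n hn
      exact iter_supp hYsupp k n hn
    have h7 : ent (iterConv Z k) ≤ k * ent Z := (iter_PM hZ k).2
    rw [h4, h5] at h3
    linarith
  have hlog := log_div_tendsto N hN1
  rw [Metric.tendsto_atTop] at hlog
  obtain ⟨K, hK⟩ := hlog (ε / 2) (half_pos hε)
  refine ⟨max K 1, ?_⟩
  intro k hk
  have hk1 : 1 ≤ k := le_trans (le_max_right K 1) hk
  have hkK : K ≤ k := le_trans (le_max_left K 1) hk
  have hkpos : (0:ℝ) < k := by exact_mod_cast hk1
  rw [Real.dist_0_eq_abs]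
  have hnn : 0 ≤ entropy (iterConv θ k) / k := by
    apply div_nonneg _ hkpos.le
    rw [hent_eq]
    exact (iter_PM hθ k).1.ent_nonneg
  rw [abs_of_nonneg hnn]
  have hl := hK k hkK
  rw [Real.dist_0_eq_abs] at hl
  have hlogk_nn : 0 ≤ Real.log ((k * N + 1 : ℕ) : ℝ) / k := by
    apply div_nonneg _ hkpos.le
    apply Real.log_nonneg
    have : (1:ℕ) ≤ k * N + 1 := by omega
    exact_mod_cast this
  rw [abs_of_nonneg hlogk_nn] at hl
  calc entropy (iterConv θ k) / k
      ≤ (Real.log ((k * N + 1 : ℕ) : ℝ) + k * ent Z) / k := by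
        rw [hent_eq]
        exact div_le_div_of_nonneg_right (hbound k) hkpos.le
    _ = Real.log ((k * N + 1 : ℕ) : ℝ) / k + ent Z := by
        field_simp
    _ < ε / 2 + ε / 2 := by
        have := hNent
        exact add_lt_add hl this
    _ = ε := by ring

end Stmt3
end

section
/- Let (z_n)_{n≥1} be a stationary sequence of nonnegative real random variables on a probability space, i.e., for all k, n the joint law of (z_{1+k}, …, z_{n+k}) equals the joint law of (z_1, …, z_n). If E[log(1 + z_1)] < ∞, then (1/k) log(1 + z_1 + ⋯ + z_k) → 0 as k → ∞, both almost surely and in L¹. -/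
/-!
Put `Yₙ = log (1 + zₙ)`; by stationarity the `Yₙ` are identically distributed and integrable.
If `Yᵢ ≤ M` for all `i < k` (with `M ≥ 0`), then `1 + z₀ + ⋯ + z_{k-1} ≤ (k + 1) eᴹ`, so
`log (1 + z₀ + ⋯ + z_{k-1}) ≤ log (k + 1) + M`.

Almost surely: `∑ₙ P(|Yₙ| > εn) = ∑ₙ P(|Y₀|/ε > n) < ∞`, so by Borel–Cantelli `Yₙ / n → 0`, and
taking `M = Y₀ + ⋯ + Y_N + εk` with `N` past which `Yₙ ≤ εn` gives the claim.

In `L¹`: taking `M = C + ∑_{i<k} (Yᵢ - C)⁺` gives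
`E[log (1 + z₀ + ⋯ + z_{k-1})] / k ≤ (log (k + 1) + C) / k + E[(Y₀ - C)⁺]`,
and the last term tends to `0` as `C → ∞` by dominated convergence.
-/

open MeasureTheory ProbabilityTheory Filter Finset Real Asymptotics

namespace Stmt6

lemma tendsto_log_natCast_add_one_div :
    Tendsto (fun k : ℕ => log (k + 1) / k) atTop (nhds 0) := by
  have hlog : (fun k : ℕ => log (k + 1)) =o[atTop] (fun k : ℕ => (k : ℝ)) := by
    have h := isLittleO_log_id_atTop.comp_tendsto tendsto_natCast_atTop_atTop
    have hdiff := ((isLittleO_one_iff ℝ).2 tendsto_log_nat_add_one_sub_log).trans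
      ((isLittleO_one_left_iff ℝ).2 (tendsto_norm_atTop_atTop.comp tendsto_natCast_atTop_atTop))
    simpa using hdiff.add h
  exact hlog.tendsto_div_nhds_zero

lemma log_one_add_sum_nonneg {ι : Type*} {b : ι → ℝ} (hb : ∀ i, 0 ≤ b i) (s : Finset ι) :
    0 ≤ log (1 + ∑ i ∈ s, b i) :=
  log_nonneg (le_add_of_nonneg_right (sum_nonneg fun i _ => hb i))

lemma log_one_add_sum_le {b : ℕ → ℝ} (hb : ∀ i, 0 ≤ b i) {k : ℕ} {M : ℝ} (hM : 0 ≤ M)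
    (hbM : ∀ i < k, log (1 + b i) ≤ M) :
    log (1 + ∑ i ∈ range k, b i) ≤ log (k + 1) + M := by
  have hb_le : ∀ i ∈ range k, b i ≤ exp M - 1 := fun i hi => by
    have := (log_le_iff_le_exp (by linarith [hb i])).1 (hbM i (mem_range.1 hi))
    linarith
  have hsum : 1 + ∑ i ∈ range k, b i ≤ (k + 1) * exp M := by
    have := sum_le_sum hb_le
    have := add_one_le_exp M
    simp only [sum_const, card_range, nsmul_eq_mul] at *
    nlinarith
  calc log (1 + ∑ i ∈ range k, b i) ≤ log ((k + 1) * exp M) :=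
        log_le_log (by linarith [sum_nonneg fun i (_ : i ∈ range k) => hb i]) hsum
    _ = log (k + 1) + M := by rw [log_mul (by positivity) (exp_ne_zero _), log_exp]

lemma log_one_add_sum_le_add_sum_posPart {b : ℕ → ℝ} (hb : ∀ i, 0 ≤ b i) (k : ℕ) {C : ℝ}
    (hC : 0 ≤ C) :
    log (1 + ∑ i ∈ range k, b i) ≤ log (k + 1) + C + ∑ i ∈ range k, (log (1 + b i) - C)⁺ := by
  rw [add_assoc]
  refine log_one_add_sum_le hb (add_nonneg hC (sum_nonneg fun i _ => posPart_nonneg _))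
    fun i hi => ?_
  have := single_le_sum (f := fun i => (log (1 + b i) - C)⁺) (fun i _ => posPart_nonneg _)
    (mem_range.2 hi)
  linarith [le_posPart (log (1 + b i) - C)]

lemma tendsto_log_one_add_sum_div {b : ℕ → ℝ} (hb : ∀ i, 0 ≤ b i)
    (h : Tendsto (fun n : ℕ => log (1 + b n) / n) atTop (nhds 0)) :
    Tendsto (fun k : ℕ => log (1 + ∑ i ∈ range k, b i) / k) atTop (nhds 0) := by
  have hterm : ∀ i, 0 ≤ log (1 + b i) := fun i => log_nonneg (le_add_of_nonneg_right (hb i))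
  refine tendsto_order.2 ⟨fun a ha => Eventually.of_forall fun k =>
    ha.trans_le (div_nonneg (log_one_add_sum_nonneg hb _) k.cast_nonneg), fun ε hε => ?_⟩
  obtain ⟨N, hN⟩ := eventually_atTop.1 <| h.eventually (eventually_le_nhds (half_pos hε))
  -- `range (N + 1)`: at `n = 0` the bound `hN` says nothing, since `x / 0 = 0`.
  set A := ∑ i ∈ range (N + 1), log (1 + b i)
  have hA : 0 ≤ A := sum_nonneg fun i _ => hterm i
  have hbound : ∀ k, log (1 + ∑ i ∈ range k, b i) ≤ log (k + 1) + (A + ε / 2 * k) := fun k =>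
    log_one_add_sum_le hb (by positivity)
      fun i hi => by
        rcases le_or_gt i N with hiN | hiN
        · have := single_le_sum (f := fun i => log (1 + b i)) (fun i _ => hterm i)
            (mem_range.2 (Nat.lt_succ_of_le hiN))
          linarith [mul_nonneg (half_pos hε).le k.cast_nonneg]
        · have hi0 : (0 : ℝ) < i := by exact_mod_cast N.zero_le.trans_lt hiN
          have hik : (i : ℝ) ≤ k := by exact_mod_cast hi.le
          linarith [(div_le_iff₀ hi0).1 (hN i hiN.le),
            mul_le_mul_of_nonneg_left hik (half_pos hε).le]
  have hrest : Tendsto (fun k : ℕ => log (k + 1) / k + A / k) atTop (nhds 0) := by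
    simpa using tendsto_log_natCast_add_one_div.add (tendsto_const_div_atTop_nhds_zero_nat A)
  filter_upwards [hrest.eventually (gt_mem_nhds (half_pos hε)), eventually_gt_atTop 0]
    with k hk hk0
  have hk0 : (0 : ℝ) < k := by exact_mod_cast hk0
  calc log (1 + ∑ i ∈ range k, b i) / k ≤ (log (k + 1) + (A + ε / 2 * k)) / k := by
        gcongr; exact hbound k
    _ = log (k + 1) / k + A / k + ε / 2 := by field_simp; ring
    _ < ε := by linarith

section Probability

variable {Ω : Type*} [MeasurableSpace Ω] {P : Measure Ω}

lemma identDistrib_of_map_fin_one_eq {z : ℕ → Ω → ℝ} (hzm : ∀ n, Measurable (z n))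
    (h : ∀ k, Measure.map (fun ω => fun i : Fin 1 => z (i + k) ω) P
      = Measure.map (fun ω => fun i : Fin 1 => z i ω) P) (n : ℕ) :
    IdentDistrib (z n) (z 0) P P := by
  have hvec : IdentDistrib (fun ω => fun i : Fin 1 => z (i + n) ω)
      (fun ω => fun i : Fin 1 => z i ω) P P :=
    ⟨(measurable_pi_lambda _ fun _ => hzm _).aemeasurable,
      (measurable_pi_lambda _ fun _ => hzm _).aemeasurable, h n⟩
  simpa [Function.comp_def] using hvec.comp (measurable_pi_apply 0)

lemma ae_eventually_abs_le_mul_of_identDistrib [IsProbabilityMeasure P] {Y : ℕ → Ω → ℝ}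
    (hY : ∀ n, IdentDistrib (Y n) (Y 0) P P) (hint : Integrable (Y 0) P) {ε : ℝ} (hε : 0 < ε) :
    ∀ᵐ ω ∂P, ∀ᶠ n : ℕ in atTop, |Y n ω| ≤ ε * n := by
  have hscaled : ∀ n : ℕ, P {ω | ε * n < |Y n ω|} = P {ω | |Y 0 ω| / ε ∈ Set.Ioi (n : ℝ)} := by
    intro n
    have := ((hY n).comp (measurable_abs.div_const ε)).measure_mem_eq
      (measurableSet_Ioi (a := (n : ℝ)))
    simpa [Set.preimage, lt_div_iff₀ hε, mul_comm] using this
  have hsum : ∑' n : ℕ, P {ω | ε * n < |Y n ω|} ≠ ⊤ := by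
    simp only [hscaled]
    exact (@tsum_prob_mem_Ioi_lt_top Ω ⟨P⟩ _ _ (hint.abs.div_const ε)
      fun ω => div_nonneg (abs_nonneg _) hε.le).ne
  filter_upwards [ae_eventually_notMem hsum] with ω hω
  simpa using hω

lemma ae_tendsto_div_atTop_zero_of_identDistrib [IsProbabilityMeasure P] {Y : ℕ → Ω → ℝ}
    (hY : ∀ n, IdentDistrib (Y n) (Y 0) P P) (hint : Integrable (Y 0) P) :
    ∀ᵐ ω ∂P, Tendsto (fun n : ℕ => Y n ω / n) atTop (nhds 0) := by
  have hall := ae_all_iff.2 fun m : ℕ =>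
    ae_eventually_abs_le_mul_of_identDistrib hY hint (Nat.one_div_pos_of_nat (n := m))
  filter_upwards [hall] with ω hω
  refine NormedAddGroup.tendsto_nhds_zero.2 fun ε hε => ?_
  obtain ⟨m, hm⟩ := exists_nat_one_div_lt hε
  filter_upwards [hω m] with n hn
  rw [Real.norm_eq_abs, abs_div, Nat.abs_cast]
  exact (div_le_of_le_mul₀ n.cast_nonneg (by positivity) (by linarith)).trans_lt hm

lemma tendsto_integral_posPart_sub_atTop {X : Ω → ℝ} (hX : Integrable X P) :
    Tendsto (fun C : ℝ => ∫ ω, (X ω - C)⁺ ∂P) atTop (nhds 0) := by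
  have hlim : ∀ ω, Tendsto (fun C : ℝ => (X ω - C)⁺) atTop (nhds 0) := fun ω =>
    tendsto_const_nhds.congr' <| (eventually_ge_atTop (X ω)).mono fun C hC =>
      (posPart_eq_zero.2 (sub_nonpos.2 hC)).symm
  simpa using tendsto_integral_filter_of_dominated_convergence
    (F := fun C ω => (X ω - C)⁺) (fun ω => |X ω|)
    (Eventually.of_forall fun C =>
      (hX.aestronglyMeasurable.sub aestronglyMeasurable_const).sup aestronglyMeasurable_const)
    ((eventually_ge_atTop 0).mono fun C hC => Eventually.of_forall fun ω => by
      rw [Real.norm_eq_abs, abs_of_nonneg (posPart_nonneg _)]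
      exact sup_le (by linarith [le_abs_self (X ω)]) (abs_nonneg _))
    hX.abs (Eventually.of_forall hlim)

lemma integrable_log_one_add_sum [IsFiniteMeasure P] {z : ℕ → Ω → ℝ}
    (hzm : ∀ n, Measurable (z n)) (hz0 : ∀ n ω, 0 ≤ z n ω)
    (hint : ∀ n, Integrable (fun ω => log (1 + z n ω)) P) (k : ℕ) :
    Integrable (fun ω => log (1 + ∑ i ∈ range k, z i ω)) P := by
  refine ((integrable_const (log (k + 1))).add
    (integrable_finsetSum (range k) fun i _ => hint i)).mono'
      (Measurable.aestronglyMeasurable (by fun_prop)) (Eventually.of_forall fun ω => ?_)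
  have hlog : ∀ i, 0 ≤ log (1 + z i ω) := fun i => log_nonneg (le_add_of_nonneg_right (hz0 i ω))
  rw [Real.norm_eq_abs, abs_of_nonneg (log_one_add_sum_nonneg (hz0 · ω) _)]
  exact log_one_add_sum_le (hz0 · ω) (sum_nonneg fun i _ => hlog i) fun i hi =>
    single_le_sum (f := fun i => log (1 + z i ω)) (fun i _ => hlog i) (mem_range.2 hi)

lemma integral_log_one_add_sum_le [IsProbabilityMeasure P] {z : ℕ → Ω → ℝ}
    (hzm : ∀ n, Measurable (z n)) (hz0 : ∀ n ω, 0 ≤ z n ω)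
    (hz : ∀ n, IdentDistrib (z n) (z 0) P P)
    (hint : Integrable (fun ω => log (1 + z 0 ω)) P) (k : ℕ) {C : ℝ} (hC : 0 ≤ C) :
    ∫ ω, log (1 + ∑ i ∈ range k, z i ω) ∂P
      ≤ log (k + 1) + C + k * ∫ ω, (log (1 + z 0 ω) - C)⁺ ∂P := by
  have hφ : Measurable fun x : ℝ => log (1 + x) := by fun_prop
  have hlog : ∀ n, IdentDistrib (fun ω => log (1 + z n ω)) (fun ω => log (1 + z 0 ω)) P P :=
    fun n => (hz n).comp hφ
  have hint_n : ∀ n, Integrable (fun ω => log (1 + z n ω)) P :=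
    fun n => (hlog n).integrable_iff.2 hint
  have hexcess_int : ∀ n, Integrable (fun ω => (log (1 + z n ω) - C)⁺) P :=
    fun n => ((hint_n n).sub (integrable_const C)).pos_part
  have hexcess_eq : ∀ n, ∫ ω, (log (1 + z n ω) - C)⁺ ∂P = ∫ ω, (log (1 + z 0 ω) - C)⁺ ∂P :=
    fun n => ((hlog n).comp (show Measurable fun x : ℝ => (x - C)⁺ by fun_prop)).integral_eq
  calc ∫ ω, log (1 + ∑ i ∈ range k, z i ω) ∂P
      ≤ ∫ ω, (log (k + 1) + C + ∑ i ∈ range k, (log (1 + z i ω) - C)⁺) ∂P :=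
        integral_mono (integrable_log_one_add_sum hzm hz0 hint_n k)
          ((integrable_const _).add (integrable_finsetSum _ fun i _ => hexcess_int i))
          fun ω => log_one_add_sum_le_add_sum_posPart (hz0 · ω) k hC
    _ = log (k + 1) + C + k * ∫ ω, (log (1 + z 0 ω) - C)⁺ ∂P := by
        rw [integral_add (integrable_const _) (integrable_finsetSum _ fun i _ => hexcess_int i),
          integral_finsetSum _ fun i _ => hexcess_int i]
        simp [hexcess_eq]

lemma tendsto_integral_abs_log_one_add_sum_div [IsProbabilityMeasure P] {z : ℕ → Ω → ℝ}
    (hzm : ∀ n, Measurable (z n)) (hz0 : ∀ n ω, 0 ≤ z n ω)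
    (hz : ∀ n, IdentDistrib (z n) (z 0) P P)
    (hint : Integrable (fun ω => log (1 + z 0 ω)) P) :
    Tendsto (fun k : ℕ => ∫ ω, |log (1 + ∑ i ∈ range k, z i ω) / k| ∂P) atTop (nhds 0) := by
  refine tendsto_order.2 ⟨fun a ha => Eventually.of_forall fun k =>
    ha.trans_le (integral_nonneg fun ω => abs_nonneg _), fun ε hε => ?_⟩
  obtain ⟨C, hC_excess, hC⟩ := ((tendsto_integral_posPart_sub_atTop hint).eventually
    (gt_mem_nhds (half_pos hε))).and (eventually_ge_atTop 0) |>.exists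
  have hrest : Tendsto (fun k : ℕ => log (k + 1) / k + C / k) atTop (nhds 0) := by
    simpa using tendsto_log_natCast_add_one_div.add (tendsto_const_div_atTop_nhds_zero_nat C)
  filter_upwards [hrest.eventually (gt_mem_nhds (half_pos hε)), eventually_gt_atTop 0]
    with k hk hk0
  have hk0 : (0 : ℝ) < k := by exact_mod_cast hk0
  calc ∫ ω, |log (1 + ∑ i ∈ range k, z i ω) / k| ∂P
      = (∫ ω, log (1 + ∑ i ∈ range k, z i ω) ∂P) / k := by
        rw [← integral_div]
        exact integral_congr_ae (Eventually.of_forall fun ω =>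
          abs_of_nonneg (div_nonneg (log_one_add_sum_nonneg (hz0 · ω) _) hk0.le))
    _ ≤ (log (k + 1) + C + k * ∫ ω, (log (1 + z 0 ω) - C)⁺ ∂P) / k := by
        gcongr
        exact integral_log_one_add_sum_le hzm hz0 hz hint k hC
    _ = log (k + 1) / k + C / k + ∫ ω, (log (1 + z 0 ω) - C)⁺ ∂P := by
        field_simp
    _ < ε := by linarith

end Probability

/-- Let `(z_n)` be a stationary sequence of nonnegative real random variables (indexed here from
`0`, so `z 0` plays the role of `z_1`).  If `E[log(1 + z_1)] < ∞`, then
`(1/k)·log(1 + z_1 + ⋯ + z_k) → 0` as `k → ∞`, both almost surely and in `L¹`. -/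
theorem log_one_add_sum_div_tendsto_zero
    {Ω : Type*} [MeasurableSpace Ω] (P : Measure Ω) [IsProbabilityMeasure P]
    (z : ℕ → Ω → ℝ) (hzm : ∀ n, Measurable (z n)) (hz0 : ∀ n ω, 0 ≤ z n ω)
    (hstat : ∀ k n : ℕ,
      Measure.map (fun ω => fun i : Fin n => z (i + k) ω) P
        = Measure.map (fun ω => fun i : Fin n => z i ω) P)
    (hint : Integrable (fun ω => Real.log (1 + z 0 ω)) P) :
    (∀ᵐ ω ∂P, Tendsto
        (fun k : ℕ => Real.log (1 + ∑ i ∈ Finset.range k, z i ω) / k) atTop (nhds 0)) ∧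
    (∀ k : ℕ, Integrable
        (fun ω => Real.log (1 + ∑ i ∈ Finset.range k, z i ω) / k) P) ∧
    Tendsto (fun k : ℕ =>
        ∫ ω, |Real.log (1 + ∑ i ∈ Finset.range k, z i ω) / k| ∂P) atTop (nhds 0) := by
  have hz : ∀ n, IdentDistrib (z n) (z 0) P P :=
    identDistrib_of_map_fin_one_eq hzm fun k => hstat k 1
  have hlog : ∀ n, IdentDistrib (fun ω => log (1 + z n ω)) (fun ω => log (1 + z 0 ω)) P P :=
    fun n => (hz n).comp (u := fun x => log (1 + x)) (by fun_prop)
  refine ⟨?_, fun k => ?_, tendsto_integral_abs_log_one_add_sum_div hzm hz0 hz hint⟩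
  · filter_upwards [ae_tendsto_div_atTop_zero_of_identDistrib hlog hint] with ω hω
    exact tendsto_log_one_add_sum_div (hz0 · ω) hω
  · exact (integrable_log_one_add_sum hzm hz0 (fun n => (hlog n).integrable_iff.2 hint) k).div_const
      _

end Stmt6
end

section
/- Let Σ be the free monoid on an alphabet W and let w ∈ Σ be a nonempty word. The w-norm is subadditive: for any two words g_1, g_2 ∈ Σ, |g_1 g_2|_w ≤ |g_1|_w + |g_2|_w. -/
namespace Stmt9

/-- `Iw w v` is the number of occurrences of `w` as a contiguous subword of `v`, counted by
starting position: the number of prefixes `v'` of `v` such that `v = v' * w * v''` for some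
word `v''`. -/
def Iw {W : Type*} [DecidableEq W] (w v : FreeMonoid W) : ℕ :=
  ((List.range ((FreeMonoid.toList v).length + 1)).filter
    (fun i => FreeMonoid.toList w <+: (FreeMonoid.toList v).drop i)).length

/-- The `w`-norm of a word: `|v|_w = I_w(v) + |w|`. -/
def wnorm {W : Type*} [DecidableEq W] (w v : FreeMonoid W) : ℕ :=
  Iw w v + FreeMonoid.length w

/-! An occurrence of `u` in `a ++ b` starting at `i` lies inside `a` if `i + |u| ≤ |a|`, inside
`b` if `|a| ≤ i`, and otherwise starts at one of the fewer than `|u|` positions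
`|a| + 1 - |u|, …, |a| - 1` straddling the junction. Hence
`I_u(a b) ≤ I_u(a) + I_u(b) + |u|`. -/

section Occurrences

variable {α : Type*} [DecidableEq α]

def occurrences (u l : List α) : Finset ℕ :=
  (Finset.range (l.length + 1)).filter (fun i => u <+: l.drop i)

lemma Iw_eq_card_occurrences (w v : FreeMonoid α) :
    Iw w v = (occurrences w.toList v.toList).card :=
  rfl

lemma mem_occurrences_of_mem_occurrences_append_left {u a b : List α} {i : ℕ}
    (hi : i ∈ occurrences u (a ++ b)) (hfit : i + u.length ≤ a.length) :
    i ∈ occurrences u a := by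
  simp only [occurrences, Finset.mem_filter, Finset.mem_range] at hi ⊢
  rw [List.drop_append_of_le_length (by omega)] at hi
  refine ⟨by omega, List.prefix_of_prefix_length_le hi.2 (List.prefix_append _ _) ?_⟩
  rw [List.length_drop]
  omega

lemma mem_occurrences_of_mem_occurrences_append_right {u a b : List α} {j : ℕ}
    (hj : a.length + j ∈ occurrences u (a ++ b)) :
    j ∈ occurrences u b := by
  simp only [occurrences, Finset.mem_filter, Finset.mem_range, List.length_append,
    List.drop_length_add_append] at hj ⊢
  exact ⟨by omega, hj.2⟩

lemma occurrences_append_subset (u a b : List α) :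
    occurrences u (a ++ b) ⊆
      occurrences u a ∪ Finset.Ico (a.length + 1 - u.length) a.length ∪
        (occurrences u b).map (addRightEmbedding a.length) := by
  intro i hi
  simp only [Finset.mem_union, Finset.mem_Ico, Finset.mem_map, addRightEmbedding_apply]
  by_cases hfit : i + u.length ≤ a.length
  · exact .inl (.inl (mem_occurrences_of_mem_occurrences_append_left hi hfit))
  by_cases hright : a.length ≤ i
  · obtain ⟨j, rfl⟩ := Nat.exists_eq_add_of_le hright
    exact .inr ⟨j, mem_occurrences_of_mem_occurrences_append_right hi, add_comm _ _⟩
  · exact .inl (.inr (by omega))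

lemma card_occurrences_append_le (u a b : List α) :
    (occurrences u (a ++ b)).card ≤
      (occurrences u a).card + (occurrences u b).card + u.length :=
  calc (occurrences u (a ++ b)).card
      ≤ (occurrences u a).card + (Finset.Ico (a.length + 1 - u.length) a.length).card +
          ((occurrences u b).map (addRightEmbedding a.length)).card :=
        (Finset.card_le_card (occurrences_append_subset u a b)).trans
          ((Finset.card_union_le _ _).trans (Nat.add_le_add_right (Finset.card_union_le _ _) _))
    _ ≤ (occurrences u a).card + (occurrences u b).card + u.length := by
        rw [Nat.card_Ico, Finset.card_map]
        omega

end Occurrences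

theorem wnorm_mul_le_general {W : Type*} [DecidableEq W] (w : FreeMonoid W)
    (g₁ g₂ : FreeMonoid W) :
    wnorm w (g₁ * g₂) ≤ wnorm w g₁ + wnorm w g₂ := by
  have h := card_occurrences_append_le w.toList g₁.toList g₂.toList
  simp only [wnorm, Iw_eq_card_occurrences, FreeMonoid.toList_mul, FreeMonoid.length]
  omega

/-- For a nonempty word `w` in the free monoid on an alphabet `W`, the `w`-norm is subadditive:
`|g₁g₂|_w ≤ |g₁|_w + |g₂|_w`. -/
theorem wnorm_mul_le {W : Type*} [DecidableEq W] (w : FreeMonoid W) (hw : w ≠ 1)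
    (g₁ g₂ : FreeMonoid W) :
    wnorm w (g₁ * g₂) ≤ wnorm w g₁ + wnorm w g₂ :=
  wnorm_mul_le_general w g₁ g₂

end Stmt9
end

section
/- Let Σ be the free monoid on a nonempty finite or countable alphabet W, μ a probability measure on Σ, and w ∈ Σ a nonempty word with μ(w) > 0. Let μ_w be the first return measure, i.e., the law of x_{τ_w} = g_1⋯g_{τ_w} where (g_n) are i.i.d. with law μ and τ_w = min{n ≥ 1 : g_n = w}. Then the hitting measures on W^ℕ of the random walks (Σ, μ) and (Σ, μ_w) coincide: Φ_*(μ^ℕ) = Φ_*((μ_w)^ℕ). -/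
/-!
Cut the sequence of increments at the successive occurrences of `w`. The product of the
increments up to and including the first occurrence has law `μ_w`, and by the strong Markov
property of the i.i.d. sequence at that time, the successive blocks are again i.i.d. with law
`μ_w`. Since `w` occurs infinitely often and is nonempty, the partial products of the blocks are
a cofinal subsequence of the partial products of the increments, so both sequences determine the
same infinite word. Hence both hitting measures are the image of `μ^ℕ` under the boundary map.
-/

open MeasureTheory ProbabilityTheory

namespace Stmt15

noncomputable instance {W : Type*} : MeasurableSpace (FreeMonoid W) := ⊤

/-- The position of the random walk at time `n`: the product of the first `n` increments. -/
def pos {W Ω : Type*} (g : ℕ → Ω → FreeMonoid W) (n : ℕ) (ω : Ω) : FreeMonoid W :=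
  ((List.range n).map (fun i => g i ω)).prod

/-- The finite word `v` is a prefix of the infinite word `ξ`. -/
def IsPrefixOf {W : Type*} (v : FreeMonoid W) (ξ : ℕ → W) : Prop :=
  ∀ i : Fin (FreeMonoid.toList v).length, (FreeMonoid.toList v).get i = ξ i

open Filter Measure

section SequenceSpace

variable {X : Type*} [MeasurableSpace X]

def shift (n : ℕ) (s : ℕ → X) : ℕ → X := fun i => s (n + i)

lemma measurable_shift (n : ℕ) : Measurable (shift (X := X) n) :=
  measurable_pi_lambda _ fun i => measurable_pi_apply (n + i)

lemma measurable_piLE_eval {n i : ℕ} (hi : i ≤ n) :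
    Measurable[Filtration.piLE n] fun s : ℕ → X => s i :=
  (measurable_pi_apply (⟨i, hi⟩ : Set.Iic n)).comp (comap_measurable (Preorder.restrictLe n))

lemma comap_le_iSup_comap_eval {κ : Type*} {S : Set ℕ} (e : κ → ℕ) (he : ∀ k, e k ∈ S) :
    MeasurableSpace.comap (fun (s : ℕ → X) k => s (e k)) MeasurableSpace.pi
      ≤ ⨆ j ∈ S, MeasurableSpace.comap (fun s : ℕ → X => s j) ‹_› := by
  change MeasurableSpace.comap _ (⨆ k, _) ≤ _
  rw [MeasurableSpace.comap_iSup]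
  refine iSup_le fun k => ?_
  rw [MeasurableSpace.comap_comp]
  exact le_iSup₂ (f := fun j (_ : j ∈ S) => MeasurableSpace.comap (fun s : ℕ → X => s j) _)
    (e k) (he k)

variable (μ : Measure X) [IsProbabilityMeasure μ]

lemma iIndepFun_eval_infinitePi :
    iIndepFun (fun i (s : ℕ → X) => s i) (infinitePi fun _ => μ) :=
  iIndepFun_infinitePi (X := fun _ => id) fun _ => measurable_id

lemma map_shift_infinitePi (n : ℕ) :
    (infinitePi fun _ : ℕ => μ).map (shift n) = infinitePi fun _ => μ := by
  rw [show shift n = fun s i => s (n + i) from rfl,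
    ((iIndepFun_eval_infinitePi μ).precomp (add_right_injective n)).map_fun_eq_infinitePi_map
      fun i => measurable_pi_apply _]
  simp [Measure.infinitePi_map_eval]

lemma indep_piLE_comap_shift (n : ℕ) :
    Indep (Filtration.piLE n) (MeasurableSpace.comap (shift (n + 1)) MeasurableSpace.pi)
      (infinitePi fun _ : ℕ => μ) := by
  have h := indep_iSup_of_disjoint (fun i => (measurable_pi_apply i).comap_le)
    ((iIndepFun_iff_iIndep _ _ _).1 (iIndepFun_eval_infinitePi μ))
    (Set.disjoint_left.2 fun i (hi : i ≤ n) (hi' : n < i) => hi.not_gt hi')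
  exact indep_of_indep_of_le_right
    (indep_of_indep_of_le_left h
      (comap_le_iSup_comap_eval (S := Set.Iic n) Subtype.val fun i => i.2))
    (comap_le_iSup_comap_eval (S := Set.Ioi n) (n + 1 + ·) fun i => by
      simp only [Set.mem_Ioi]; omega)

theorem measure_inter_shift_preimage {n : ℕ} {A : Set (ℕ → X)}
    (hA : MeasurableSet[Filtration.piLE n] A) {S : Set (ℕ → X)} (hS : MeasurableSet S) :
    (infinitePi fun _ : ℕ => μ) (A ∩ shift (n + 1) ⁻¹' S)
      = (infinitePi fun _ : ℕ => μ) A * (infinitePi fun _ : ℕ => μ) S := by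
  rw [(Indep_iff _ _ _).1 (indep_piLE_comap_shift μ n) _ _ hA ⟨S, hS, rfl⟩,
    ← Measure.map_apply (measurable_shift _) hS, map_shift_infinitePi]

lemma ae_frequently_mem_infinitePi {A : Set X} (hA : MeasurableSet A) (hμA : μ A ≠ 0) :
    ∀ᵐ s ∂(infinitePi fun _ : ℕ => μ), ∃ᶠ n in atTop, s n ∈ A := by
  have hm : ∀ n, MeasurableSet {s : ℕ → X | s n ∈ A} := fun n => measurable_pi_apply n hA
  have hindep : iIndepSet (fun n => {s : ℕ → X | s n ∈ A}) (infinitePi fun _ : ℕ => μ) :=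
    (iIndepSet_iff_meas_biInter hm).2 fun I =>
      (iIndepFun_eval_infinitePi μ).measure_inter_preimage_eq_mul I fun _ _ => hA
  have hsum : ∑' n, (infinitePi fun _ : ℕ => μ) {s | s n ∈ A} = ⊤ := by
    have h : ∀ n, (infinitePi fun _ : ℕ => μ) {s | s n ∈ A} = μ A := fun n =>
      (measurePreserving_eval_infinitePi (fun _ : ℕ => μ) n).measure_preimage
        hA.nullMeasurableSet
    simp only [h]
    exact ENNReal.tsum_const_eq_top_of_ne_zero hμA
  have hlim := measure_limsup_eq_one hm hindep hsum
  rw [← measure_univ (μ := infinitePi fun _ : ℕ => μ)] at hlim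
  filter_upwards [(ae_mem_iff_measure_eq
    (MeasurableSet.measurableSet_limsup hm).nullMeasurableSet).2 hlim] with s hs
  exact mem_limsup_iff_frequently_mem.1 hs

end SequenceSpace

theorem eq_infinitePi_of_pi_range {X : ℕ → Type*} [∀ i, MeasurableSpace (X i)]
    (μ : ∀ i, Measure (X i)) [∀ i, IsProbabilityMeasure (μ i)] {ν : Measure (∀ i, X i)}
    (h : ∀ m (t : ∀ i, Set (X i)), (∀ i, MeasurableSet (t i)) →
      ν (Set.pi (Finset.range m) t) = ∏ i ∈ Finset.range m, μ i (t i)) :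
    ν = infinitePi μ := by
  classical
  refine eq_infinitePi μ fun I t ht => ?_
  obtain ⟨m, hIm⟩ : ∃ m, I ⊆ Finset.range m :=
    ⟨I.sup id + 1, fun i hi =>
      Finset.mem_range.2 (Nat.lt_succ_of_le (Finset.le_sup (f := id) hi))⟩
  have hpi : Set.pi I t = Set.pi (Finset.range m) fun i => if i ∈ I then t i else Set.univ := by
    ext s
    simp only [Set.mem_pi, Finset.mem_coe]
    exact ⟨fun hs i _ => by split_ifs with hi; exacts [hs i hi, trivial],
      fun hs i hi => by simpa [hi] using hs i (hIm hi)⟩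
  rw [hpi, h m _ fun i => by split_ifs; exacts [ht i, .univ],
    ← Finset.prod_subset hIm fun i _ hi => by simp [hi]]
  exact Finset.prod_congr rfl fun i hi => by simp [hi]

lemma measurable_sInf_setOf {α : Type*} [MeasurableSpace α] {p : α → ℕ → Prop}
    (hp : ∀ n, MeasurableSet {x | p x n}) : Measurable fun x => sInf {n | p x n} := by
  classical
  have hq : ∀ x, ∃ n, p x n ∨ ¬∃ k, p x k := fun x =>
    (em (∃ k, p x k)).elim (fun h => h.imp fun _ => Or.inl) fun h => ⟨0, Or.inr h⟩
  have hE : MeasurableSet {x | ∃ k, p x k} := by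
    simpa only [Set.ofPred_exists] using MeasurableSet.iUnion hp
  -- off `{x | ∃ k, p x k}` the relaxed predicate holds at `0`, matching `sInf ∅ = 0`
  convert measurable_find hq fun n => (hp n).union hE.compl using 1
  funext x
  by_cases h : ∃ k, p x k
  · exact le_antisymm (Nat.sInf_le ((Nat.find_spec (hq x)).resolve_right (not_not.2 h)))
      (le_csInf h fun n hn => Nat.find_min' _ (Or.inl hn))
  · rw [((Nat.find_eq_zero _).2 (Or.inr h)), Nat.sInf_eq_zero]
    exact Or.inr (Set.eq_empty_of_forall_notMem fun n hn => h ⟨n, hn⟩)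

section Blocks

variable {X M : Type*} [Monoid M]

def prefixProd (s : ℕ → M) (n : ℕ) : M := ((List.range n).map s).prod

@[simp] lemma prefixProd_zero (s : ℕ → M) : prefixProd s 0 = 1 := rfl

lemma prefixProd_succ (s : ℕ → M) (n : ℕ) : prefixProd s (n + 1) = prefixProd s n * s n := by
  simp [prefixProd, List.range_succ]

lemma prefixProd_add (s : ℕ → M) (a b : ℕ) :
    prefixProd s (a + b) = prefixProd s a * prefixProd (shift a s) b := by
  simp [prefixProd, List.range_add, Function.comp_def]
  rfl

/-- One past the index of the first occurrence of `w`; since `sInf ∅ = 0`, it is `1` on the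
(null) set of sequences that never take the value `w`. -/
noncomputable def returnTime (w : X) (s : ℕ → X) : ℕ := sInf {n | s n = w} + 1

noncomputable def afterReturn (w : X) (s : ℕ → X) : ℕ → X := shift (returnTime w s) s

noncomputable def firstBlock (w : M) (s : ℕ → M) : M := prefixProd s (returnTime w s)

/-- `blocks w s k` is the product of the increments after the `k`-th occurrence of `w`, up to
and including the `(k+1)`-st: the `k`-th increment of the walk with step law `μ_w`. -/
noncomputable def blocks (w : M) (s : ℕ → M) (k : ℕ) : M :=
  firstBlock w ((afterReturn w)^[k] s)

def hitsFirstAt (w : X) (n : ℕ) : Set (ℕ → X) := {s | s n = w ∧ ∀ i < n, s i ≠ w}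

lemma pairwise_disjoint_hitsFirstAt (w : X) :
    Pairwise (Function.onFun Disjoint (hitsFirstAt w)) := by
  intro m n hmn
  refine Set.disjoint_left.2 fun s hm hn => ?_
  rcases hmn.lt_or_gt with h | h
  exacts [hn.2 m h hm.1, hm.2 n h hn.1]

lemma exists_mem_hitsFirstAt {w : X} {s : ℕ → X} (h : ∃ n, s n = w) :
    ∃ n, s ∈ hitsFirstAt w n := by
  classical
  exact ⟨Nat.find h, Nat.find_spec h, fun i hi => Nat.find_min h hi⟩

lemma returnTime_of_mem_hitsFirstAt {w : X} {n : ℕ} {s : ℕ → X} (hs : s ∈ hitsFirstAt w n) :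
    returnTime w s = n + 1 := by
  rw [returnTime, le_antisymm (Nat.sInf_le (s := {i | s i = w}) hs.1)
    (le_csInf ⟨n, hs.1⟩ fun i hi => not_lt.1 fun h => hs.2 i h hi)]

lemma sInf_one_le_eq_returnTime {w : X} {s : ℕ → X} (h : ∃ n, s (n + 1) = w) :
    sInf {n | 1 ≤ n ∧ s n = w} = returnTime w fun n => s (n + 1) := by
  obtain ⟨n, hn⟩ := h
  have hpos : 1 ≤ sInf {n | 1 ≤ n ∧ s n = w} :=
    (Nat.sInf_mem (s := {n | 1 ≤ n ∧ s n = w}) ⟨n + 1, by omega, hn⟩).1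
  rw [returnTime, ← Nat.sInf_add hpos]
  simp

lemma blocks_succ (w : M) (s : ℕ → M) (k : ℕ) :
    blocks w s (k + 1) = blocks w (afterReturn w s) k := by
  rw [blocks, blocks, Function.iterate_succ_apply]

lemma exists_prefixProd_blocks_eq (w : M) (s : ℕ → M) (m : ℕ) :
    ∃ n, m ≤ n ∧ (afterReturn w)^[m] s = shift n s ∧
      prefixProd (blocks w s) m = prefixProd s n := by
  induction m with
  | zero => exact ⟨0, le_rfl, by funext i; simp [shift], rfl⟩
  | succ m ih =>
    obtain ⟨n, hmn, hiter, hprod⟩ := ih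
    refine ⟨n + returnTime w (shift n s), by unfold returnTime; omega, ?_, ?_⟩
    · rw [Function.iterate_succ_apply', hiter]
      funext i
      simp [afterReturn, shift, add_assoc]
    · rw [prefixProd_succ, hprod, blocks, hiter, firstBlock, prefixProd_add]

end Blocks

section FirstReturn

variable {X : Type*} [MeasurableSpace X] [MeasurableSingletonClass X]

lemma measurable_returnTime (w : X) : Measurable (returnTime w) :=
  (measurable_sInf_setOf fun n => measurable_pi_apply n (measurableSet_singleton w)).add_const 1

lemma measurable_afterReturn (w : X) : Measurable (afterReturn w) :=
  (measurable_from_prod_countable_left (f := fun p : (ℕ → X) × ℕ => shift p.2 p.1)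
    fun n => measurable_shift n).comp (measurable_id.prodMk (measurable_returnTime w))

lemma measurableSet_piLE_hitsFirstAt (w : X) (n : ℕ) :
    MeasurableSet[Filtration.piLE n] (hitsFirstAt w n) := by
  simp only [hitsFirstAt, Set.ofPred_and, Set.ofPred_forall]
  exact (measurable_piLE_eval le_rfl (measurableSet_singleton w)).inter
    (.iInter fun i => .iInter fun hi =>
      (measurable_piLE_eval hi.le (measurableSet_singleton w)).compl)

lemma measure_eq_tsum_inter_hitsFirstAt (μ : Measure X) [IsProbabilityMeasure μ] {w : X}
    (hw : μ {w} ≠ 0) {A : Set (ℕ → X)} (hA : MeasurableSet A) :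
    (infinitePi fun _ : ℕ => μ) A
      = ∑' n, (infinitePi fun _ : ℕ => μ) (A ∩ hitsFirstAt w n) := by
  have hcover : ∀ᵐ s ∂(infinitePi fun _ : ℕ => μ), s ∈ ⋃ n, hitsFirstAt w n := by
    filter_upwards [ae_frequently_mem_infinitePi μ (measurableSet_singleton w) hw] with s hs
    exact Set.mem_iUnion.2 (exists_mem_hitsFirstAt hs.exists)
  calc (infinitePi fun _ : ℕ => μ) A
      = (infinitePi fun _ : ℕ => μ) (A ∩ ⋃ n, hitsFirstAt w n) :=
        (measure_inter_conull (ae_iff.1 hcover)).symm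
    _ = ∑' n, (infinitePi fun _ : ℕ => μ) (A ∩ hitsFirstAt w n) := by
        rw [Set.inter_iUnion, measure_iUnion (fun m n hmn =>
          (pairwise_disjoint_hitsFirstAt w hmn).mono Set.inter_subset_right Set.inter_subset_right)
          fun n => hA.inter (Filtration.le _ n _ (measurableSet_piLE_hitsFirstAt w n))]

end FirstReturn

section BlockLaw

variable {M : Type*} [Monoid M] [MeasurableSpace M] [MeasurableSingletonClass M] [Countable M]

lemma measurable_piLE_prefixProd {n k : ℕ} (hk : k ≤ n + 1) :
    Measurable[Filtration.piLE n] fun s : ℕ → M => prefixProd s k := by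
  induction k with
  | zero => exact measurable_const
  | succ k ih =>
    simp only [prefixProd_succ]
    exact (ih (by omega)).mul (measurable_piLE_eval (by omega))

lemma measurable_prefixProd (k : ℕ) : Measurable fun s : ℕ → M => prefixProd s k :=
  (measurable_piLE_prefixProd (n := k) (by omega)).mono (Filtration.le _ k) le_rfl

lemma measurable_firstBlock (w : M) : Measurable (firstBlock w) :=
  (measurable_from_prod_countable_left (f := fun p : (ℕ → M) × ℕ => prefixProd p.1 p.2)
    measurable_prefixProd).comp (measurable_id.prodMk (measurable_returnTime w))

lemma measurable_blocks (w : M) : Measurable (blocks w) :=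
  measurable_pi_lambda _ fun k =>
    (measurable_firstBlock w).comp ((measurable_afterReturn w).iterate k)

variable (μ : Measure M) [IsProbabilityMeasure μ] {w : M}

lemma measure_singleton_le_map_firstBlock :
    μ {w} ≤ (infinitePi fun _ : ℕ => μ).map (firstBlock w) {w} := by
  rw [Measure.map_apply (measurable_firstBlock w) (measurableSet_singleton w),
    ← (measurePreserving_eval_infinitePi (fun _ : ℕ => μ) 0).measure_preimage
      (measurableSet_singleton w).nullMeasurableSet]
  refine measure_mono fun s (hs : s 0 = w) => ?_
  have hs0 : s ∈ hitsFirstAt w 0 := ⟨hs, fun i hi => absurd hi (Nat.not_lt_zero i)⟩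
  simp [firstBlock, returnTime_of_mem_hitsFirstAt hs0, prefixProd_succ, hs]

/-- Strong Markov property at the first occurrence of `w`: split according to the time `n` of
that occurrence and apply `measure_inter_shift_preimage` at each fixed time `n`. -/
theorem measure_firstBlock_preimage_inter_afterReturn_preimage (hw : μ {w} ≠ 0) (T : Set M)
    {S : Set (ℕ → M)} (hS : MeasurableSet S) :
    (infinitePi fun _ : ℕ => μ) (firstBlock w ⁻¹' T ∩ afterReturn w ⁻¹' S)
      = (infinitePi fun _ : ℕ => μ) (firstBlock w ⁻¹' T)
        * (infinitePi fun _ : ℕ => μ) S := by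
  have hT : MeasurableSet T := .of_discrete
  rw [measure_eq_tsum_inter_hitsFirstAt μ hw (measurable_firstBlock w hT),
    measure_eq_tsum_inter_hitsFirstAt μ hw
      ((measurable_firstBlock w hT).inter (measurable_afterReturn w hS)),
    ← ENNReal.tsum_mul_right]
  congr 1 with n
  have hA : MeasurableSet[Filtration.piLE n]
      ((fun s => prefixProd s (n + 1)) ⁻¹' T ∩ hitsFirstAt w n) :=
    (measurable_piLE_prefixProd le_rfl hT).inter (measurableSet_piLE_hitsFirstAt w n)
  have hfirst : firstBlock w ⁻¹' T ∩ hitsFirstAt w n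
      = (fun s => prefixProd s (n + 1)) ⁻¹' T ∩ hitsFirstAt w n := by
    ext s
    refine and_congr_left fun hs => ?_
    simp only [Set.mem_preimage, firstBlock, returnTime_of_mem_hitsFirstAt hs]
  have hboth : firstBlock w ⁻¹' T ∩ afterReturn w ⁻¹' S ∩ hitsFirstAt w n
      = (fun s => prefixProd s (n + 1)) ⁻¹' T ∩ hitsFirstAt w n
        ∩ shift (n + 1) ⁻¹' S := by
    ext s
    by_cases hs : s ∈ hitsFirstAt w n
    · simp [hs, firstBlock, afterReturn, returnTime_of_mem_hitsFirstAt hs]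
    · simp [hs]
  rw [hfirst, hboth, measure_inter_shift_preimage μ hA hS]

lemma measure_blocks_preimage_pi_range (hw : μ {w} ≠ 0) (m : ℕ) (t : ℕ → Set M) :
    (infinitePi fun _ : ℕ => μ) (blocks w ⁻¹' Set.pi (Finset.range m) t)
      = ∏ k ∈ Finset.range m, (infinitePi fun _ : ℕ => μ) (firstBlock w ⁻¹' t k) := by
  induction m generalizing t with
  | zero => simp
  | succ m ih =>
    have hsplit : blocks w ⁻¹' Set.pi (Finset.range (m + 1)) t = firstBlock w ⁻¹' t 0 ∩
        afterReturn w ⁻¹' (blocks w ⁻¹' Set.pi (Finset.range m) fun k => t (k + 1)) := by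
      ext s
      simp only [Set.mem_preimage, Set.mem_inter_iff, Set.mem_pi, Finset.coe_range, Set.mem_Iio]
      rw [Nat.forall_lt_succ_left]
      rfl
    rw [hsplit, measure_firstBlock_preimage_inter_afterReturn_preimage μ hw _
      (measurable_blocks w (.pi (Finset.range m).countable_toSet fun _ _ => .of_discrete)),
      ih, Finset.prod_range_succ', mul_comm]

theorem map_blocks_infinitePi (hw : μ {w} ≠ 0) :
    (infinitePi fun _ : ℕ => μ).map (blocks w)
      = infinitePi fun _ : ℕ => (infinitePi fun _ : ℕ => μ).map (firstBlock w) := by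
  have := isProbabilityMeasure_map (μ := infinitePi fun _ : ℕ => μ)
    (measurable_firstBlock w).aemeasurable
  refine eq_infinitePi_of_pi_range _ fun m t ht => ?_
  rw [Measure.map_apply (measurable_blocks w)
      (.pi (Finset.range m).countable_toSet fun i _ => ht i),
    measure_blocks_preimage_pi_range μ hw]
  exact Finset.prod_congr rfl fun k _ => (Measure.map_apply (measurable_firstBlock w) (ht k)).symm

end BlockLaw

section Boundary

variable {W : Type*}

lemma prefixProd_toList_isPrefix (s : ℕ → FreeMonoid W) {m n : ℕ} (h : m ≤ n) :
    (prefixProd s m).toList <+: (prefixProd s n).toList := by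
  obtain ⟨d, rfl⟩ := Nat.exists_eq_add_of_le h
  rw [prefixProd_add, FreeMonoid.toList_mul]
  exact List.prefix_append _ _

lemma length_prefixProd_le (s : ℕ → FreeMonoid W) {m n : ℕ} (h : m ≤ n) :
    (prefixProd s m).length ≤ (prefixProd s n).length :=
  (prefixProd_toList_isPrefix s h).length_le

lemma exists_lt_length_prefixProd {s : ℕ → FreeMonoid W} (hs : ∃ᶠ n in atTop, s n ≠ 1)
    (k : ℕ) : ∃ n, k < (prefixProd s n).length := by
  have hgrow : ∀ n, ∃ n', (prefixProd s n).length < (prefixProd s n').length := fun n => by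
    obtain ⟨n', hnn', hn'⟩ := frequently_atTop.1 hs n
    refine ⟨n' + 1, ?_⟩
    rw [prefixProd_succ, FreeMonoid.length_mul]
    have := (FreeMonoid.length_eq_zero (a := s n')).not.2 hn'
    have := length_prefixProd_le s hnn'
    omega
  induction k with
  | zero => simpa using hgrow 0
  | succ k ih =>
    obtain ⟨n, hn⟩ := ih
    obtain ⟨n', hn'⟩ := hgrow n
    exact ⟨n', by omega⟩

variable [Nonempty W]

noncomputable def boundary (s : ℕ → FreeMonoid W) (k : ℕ) : W :=
  (prefixProd s (sInf {n | k < (prefixProd s n).length})).toList.getD k (Classical.arbitrary W)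

lemma isPrefixOf_boundary {s : ℕ → FreeMonoid W}
    (hs : ∀ k, ∃ n, k < (prefixProd s n).length) (n : ℕ) :
    IsPrefixOf (prefixProd s n) (boundary s) := by
  rintro ⟨k, hk⟩
  have hN : k < (prefixProd s (sInf {n | k < (prefixProd s n).length})).toList.length :=
    Nat.sInf_mem (hs k)
  rw [List.get_eq_getElem, boundary, List.getD_eq_getElem _ _ hN]
  rcases le_total n (sInf {n | k < (prefixProd s n).length}) with h | h
  exacts [(prefixProd_toList_isPrefix s h).getElem hk,
    ((prefixProd_toList_isPrefix s h).getElem hN).symm]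

lemma eq_boundary_of_isPrefixOf {s : ℕ → FreeMonoid W}
    (hs : ∀ k, ∃ n, k < (prefixProd s n).length) {φ : ℕ → W}
    (hφ : ∀ n, IsPrefixOf (prefixProd s n) φ) : φ = boundary s := by
  funext k
  obtain ⟨n, hn⟩ := hs k
  exact (hφ n ⟨k, hn⟩).symm.trans (isPrefixOf_boundary hs n ⟨k, hn⟩)

lemma boundary_blocks {w : FreeMonoid W} (hw1 : w ≠ 1) {s : ℕ → FreeMonoid W}
    (hs : ∃ᶠ n in atTop, s n = w) : boundary (blocks w s) = boundary s := by
  have hlen := exists_lt_length_prefixProd (hs.mono fun n hn => hn ▸ hw1)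
  have hlen_blocks : ∀ k, ∃ m, k < (prefixProd (blocks w s) m).length := fun k => by
    obtain ⟨m, hm⟩ := hlen k
    obtain ⟨n, hmn, -, hprod⟩ := exists_prefixProd_blocks_eq w s m
    exact ⟨m, hprod ▸ hm.trans_le (length_prefixProd_le s hmn)⟩
  refine (eq_boundary_of_isPrefixOf hlen_blocks fun m => ?_).symm
  obtain ⟨n, -, -, hprod⟩ := exists_prefixProd_blocks_eq w s m
  rw [hprod]
  exact isPrefixOf_boundary hlen n

variable [Countable W] [MeasurableSpace W]

lemma measurable_boundary : Measurable (boundary : (ℕ → FreeMonoid W) → ℕ → W) := by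
  refine measurable_pi_lambda _ fun k => ?_
  have hN : Measurable fun s : ℕ → FreeMonoid W => sInf {n | k < (prefixProd s n).length} :=
    measurable_sInf_setOf fun n =>
      measurable_prefixProd n (MeasurableSet.of_discrete (s := {a : FreeMonoid W | k < a.length}))
  have hG : Measurable fun p : (ℕ → FreeMonoid W) × ℕ =>
      (prefixProd p.1 p.2).toList.getD k (Classical.arbitrary W) :=
    measurable_from_prod_countable_left fun n =>
      (Measurable.of_discrete
        (f := fun a : FreeMonoid W => a.toList.getD k (Classical.arbitrary W))).comp
          (measurable_prefixProd n)
  exact hG.comp (measurable_id.prodMk hN)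

end Boundary

section HittingMeasure

variable {W : Type*} [Countable W] [Nonempty W] [MeasurableSpace W]

theorem map_boundary_infinitePi_map_firstBlock (μ : Measure (FreeMonoid W))
    [IsProbabilityMeasure μ] {w : FreeMonoid W} (hw1 : w ≠ 1) (hw : μ {w} ≠ 0) :
    (infinitePi fun _ : ℕ => (infinitePi fun _ : ℕ => μ).map (firstBlock w)).map boundary
      = (infinitePi fun _ : ℕ => μ).map boundary := by
  rw [← map_blocks_infinitePi μ hw, Measure.map_map measurable_boundary (measurable_blocks w)]
  refine Measure.map_congr ?_
  filter_upwards [ae_frequently_mem_infinitePi μ (measurableSet_singleton w) hw] with s hs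
  exact boundary_blocks hw1 hs

theorem map_eq_map_boundary_infinitePi {Ω : Type*} [MeasurableSpace Ω] {P : Measure Ω}
    {μ : Measure (FreeMonoid W)} [IsProbabilityMeasure μ] (hμ : μ {1}ᶜ ≠ 0)
    {g : ℕ → Ω → FreeMonoid W} (hgm : ∀ n, Measurable (g n)) (hindep : iIndepFun g P)
    (hlaw : ∀ n, P.map (g n) = μ) {Φ : Ω → ℕ → W}
    (hΦ : ∀ᵐ ω ∂P, ∀ n, IsPrefixOf (pos g n ω) (Φ ω)) :
    P.map Φ = (infinitePi fun _ : ℕ => μ).map boundary := by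
  have hmeas : Measurable fun ω n => g n ω := measurable_pi_lambda _ hgm
  have hseq : P.map (fun ω n => g n ω) = infinitePi fun _ => μ := by
    rw [hindep.map_fun_eq_infinitePi_map hgm]
    simp only [hlaw]
  have hne : ∀ᵐ ω ∂P, ∃ᶠ n in atTop, g n ω ∈ ({1}ᶜ : Set (FreeMonoid W)) :=
    ae_of_ae_map hmeas.aemeasurable
      (hseq ▸ ae_frequently_mem_infinitePi μ (measurableSet_singleton 1).compl hμ)
  rw [← hseq, Measure.map_map measurable_boundary hmeas]
  refine Measure.map_congr ?_
  filter_upwards [hΦ, hne] with ω hpre hω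
  exact eq_boundary_of_isPrefixOf (exists_lt_length_prefixProd hω) hpre

end HittingMeasure

theorem hitting_measure_eq_hitting_measure_of_first_return_general
    {W : Type*} [Countable W] [Nonempty W]
    [MeasurableSpace W]
    (μ : Measure (FreeMonoid W)) [IsProbabilityMeasure μ]
    (w : FreeMonoid W) (hw1 : w ≠ 1) (hw : 0 < μ {w})
    -- the random walk with step distribution `μ`
    {Ω : Type*} [MeasurableSpace Ω] (P : Measure Ω)
    (g : ℕ → Ω → FreeMonoid W) (hgm : ∀ n, Measurable (g n))
    (hindep : iIndepFun (m := fun _ => (⊤ : MeasurableSpace (FreeMonoid W))) g P)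
    (hlaw : ∀ n, Measure.map (g n) P = μ)
    (Φ : Ω → ℕ → W)
    (hΦ : ∀ᵐ ω ∂P, ∀ n, IsPrefixOf (pos g n ω) (Φ ω))
    -- the first return word `x_{τ_w}` and its law `μ_w`
    (xτ : Ω → FreeMonoid W)
    (hxτ : ∀ ω, xτ ω =
      ((List.range (sInf {n : ℕ | 1 ≤ n ∧ g n ω = w})).map (fun i => g (i + 1) ω)).prod)
    -- the random walk with step distribution `μ_w = Measure.map xτ P`
    {Ω' : Type*} [MeasurableSpace Ω'] (P' : Measure Ω')
    (g' : ℕ → Ω' → FreeMonoid W) (hgm' : ∀ n, Measurable (g' n))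
    (hindep' : iIndepFun (m := fun _ => (⊤ : MeasurableSpace (FreeMonoid W))) g' P')
    (hlaw' : ∀ n, Measure.map (g' n) P' = Measure.map xτ P)
    (Φ' : Ω' → ℕ → W)
    (hΦ' : ∀ᵐ ω ∂P', ∀ n, IsPrefixOf (pos g' n ω) (Φ' ω)) :
    Measure.map Φ P = Measure.map Φ' P' := by
  have hmeas : Measurable fun ω n => g (n + 1) ω := measurable_pi_lambda _ fun n => hgm (n + 1)
  have hshift : P.map (fun ω n => g (n + 1) ω) = infinitePi fun _ => μ := by
    rw [(hindep.precomp (add_left_injective 1)).map_fun_eq_infinitePi_map fun n => hgm (n + 1)]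
    simp only [hlaw]
  have hfirst : P.map xτ = (infinitePi fun _ : ℕ => μ).map (firstBlock w) := by
    rw [← hshift, Measure.map_map (measurable_firstBlock w) hmeas]
    refine Measure.map_congr ?_
    filter_upwards [ae_of_ae_map hmeas.aemeasurable
      (hshift ▸ ae_frequently_mem_infinitePi μ (measurableSet_singleton w) hw.ne')] with ω hω
    rw [hxτ ω, sInf_one_le_eq_returnTime (s := fun n => g n ω) hω.exists]
    rfl
  rw [hfirst] at hlaw'
  have := isProbabilityMeasure_map (μ := infinitePi fun _ : ℕ => μ)
    (measurable_firstBlock w).aemeasurable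
  have hne : ∀ ν : Measure (FreeMonoid W), μ {w} ≤ ν {w} → ν {1}ᶜ ≠ 0 := fun ν hν =>
    (hw.trans_le (hν.trans (measure_mono (Set.singleton_subset_iff.2 hw1)))).ne'
  rw [map_eq_map_boundary_infinitePi (hne μ le_rfl) hgm hindep hlaw hΦ,
    map_eq_map_boundary_infinitePi (hne _ (measure_singleton_le_map_firstBlock μ))
      hgm' hindep' hlaw' hΦ',
    map_boundary_infinitePi_map_firstBlock μ hw1 hw.ne']

/-- Let `μ` be a probability measure on the free monoid on a nonempty countable alphabet, `w` a
nonempty word with `μ(w) > 0`, and let `μ_w` be the first return measure (the law of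
`x_{τ_w} = g_1 ⋯ g_{τ_w}`, where `(g_n)` are i.i.d. with law `μ` and `τ_w = min{n ≥ 1 : g_n = w}`).
Then the hitting measures on `W^ℕ` of the random walks `(Σ, μ)` and `(Σ, μ_w)` coincide:
`Φ_*(μ^ℕ) = Φ_*((μ_w)^ℕ)`.  Here both walks are realized by i.i.d. increment sequences together
with measurable boundary maps `Φ`, `Φ'` sending a.e. sample path to the unique infinite word of
which every position of the walk is a prefix. -/
theorem hitting_measure_eq_hitting_measure_of_first_return
    {W : Type*} [Countable W] [Nonempty W]
    [MeasurableSpace W] [MeasurableSingletonClass W]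
    (μ : Measure (FreeMonoid W)) [IsProbabilityMeasure μ]
    (w : FreeMonoid W) (hw1 : w ≠ 1) (hw : 0 < μ {w})
    -- the random walk with step distribution `μ`
    {Ω : Type*} [MeasurableSpace Ω] (P : Measure Ω) [IsProbabilityMeasure P]
    (g : ℕ → Ω → FreeMonoid W) (hgm : ∀ n, Measurable (g n))
    (hindep : iIndepFun (m := fun _ => (⊤ : MeasurableSpace (FreeMonoid W))) g P)
    (hlaw : ∀ n, Measure.map (g n) P = μ)
    (Φ : Ω → ℕ → W) (hΦm : Measurable Φ)
    (hΦ : ∀ᵐ ω ∂P, ∀ n, IsPrefixOf (pos g n ω) (Φ ω))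
    -- the first return word `x_{τ_w}` and its law `μ_w`
    (xτ : Ω → FreeMonoid W)
    (hxτ : ∀ ω, xτ ω =
      ((List.range (sInf {n : ℕ | 1 ≤ n ∧ g n ω = w})).map (fun i => g (i + 1) ω)).prod)
    -- the random walk with step distribution `μ_w = Measure.map xτ P`
    {Ω' : Type*} [MeasurableSpace Ω'] (P' : Measure Ω') [IsProbabilityMeasure P']
    (g' : ℕ → Ω' → FreeMonoid W) (hgm' : ∀ n, Measurable (g' n))
    (hindep' : iIndepFun (m := fun _ => (⊤ : MeasurableSpace (FreeMonoid W))) g' P')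
    (hlaw' : ∀ n, Measure.map (g' n) P' = Measure.map xτ P)
    (Φ' : Ω' → ℕ → W) (hΦm' : Measurable Φ')
    (hΦ' : ∀ᵐ ω ∂P', ∀ n, IsPrefixOf (pos g' n ω) (Φ' ω)) :
    Measure.map Φ P = Measure.map Φ' P' :=
  hitting_measure_eq_hitting_measure_of_first_return_general μ w hw1 hw P g hgm hindep hlaw Φ hΦ xτ
    hxτ P' g' hgm' hindep' hlaw' Φ' hΦ'

end Stmt15
end

section
/- Let Σ be the free monoid on a nonempty finite or countable alphabet W, and let μ be a probability measure on Σ with μ(e) < 1, where e is the empty word. Then for μ^ℕ-almost every increment sequence (g_n)_{n≥1}, the word lengths |x_n| of the positions x_n = g_1⋯g_n tend to infinity, and there exists a unique infinite word ξ ∈ W^ℕ such that every x_n is a prefix of ξ. -/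
/-!
Each increment is nontrivial with probability `μ({e}ᶜ) > 0`, independently, so by the second
Borel–Cantelli lemma almost surely infinitely many increments are nontrivial; then `|x_n| → ∞`.
Since `x_{n+1} = x_n g_{n+1}` in a free monoid, the positions form a chain for the prefix order,
and a prefix chain of unbounded length determines exactly one infinite word: its `k`-th letter
is the `k`-th letter of any `x_n` long enough to have one.
-/

open MeasureTheory ProbabilityTheory Filter

namespace Stmt17

noncomputable instance {W : Type*} : MeasurableSpace (FreeMonoid W) := ⊤

/-- The position of the random walk at time `n`: the product of the first `n` increments. -/
def pos {W Ω : Type*} (g : ℕ → Ω → FreeMonoid W) (n : ℕ) (ω : Ω) : FreeMonoid W :=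
  ((List.range n).map (fun i => g i ω)).prod

/-- The finite word `v` is a prefix of the infinite word `ξ`. -/
def IsPrefixOf {W : Type*} (v : FreeMonoid W) (ξ : ℕ → W) : Prop :=
  ∀ i : Fin (FreeMonoid.toList v).length, (FreeMonoid.toList v).get i = ξ i

theorem existsUnique_limit_of_isPrefix_of_tendsto_length {α : Type*} (l : ℕ → List α)
    (hprefix : ∀ ⦃m n⦄, m ≤ n → l m <+: l n)
    (hlen : Tendsto (fun n => (l n).length) atTop atTop) :
    ∃! ξ : ℕ → α, ∀ n (i : Fin (l n).length), (l n).get i = ξ i := by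
  choose N hN using fun k => (hlen.eventually_gt_atTop k).exists
  have hget : ∀ n k (hk : k < (l n).length), (l n)[k] = (l (N k))[k]'(hN k) := fun n k hk => by
    rw [(hprefix (le_max_left n (N k))).getElem hk,
      (hprefix (le_max_right n (N k))).getElem (hN k)]
  exact ⟨fun k => (l (N k))[k]'(hN k), fun n i => hget n i i.isLt,
    fun ξ hξ => funext fun k => (hξ (N k) ⟨k, hN k⟩).symm⟩

section Walk

variable {W Ω : Type*} (g : ℕ → Ω → FreeMonoid W) (ω : Ω)

theorem pos_succ (n : ℕ) : pos g (n + 1) ω = pos g n ω * g n ω := by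
  simp [pos, List.range_succ]

theorem toList_pos_prefix {m n : ℕ} (hmn : m ≤ n) :
    (pos g m ω).toList <+: (pos g n ω).toList := by
  induction n, hmn using Nat.le_induction with
  | base => exact List.prefix_refl _
  | succ n _ ih =>
    rw [pos_succ, FreeMonoid.toList_mul]
    exact ih.trans (List.prefix_append _ _)

theorem tendsto_length_pos_of_frequently_ne_one (hfreq : ∃ᶠ n in atTop, g n ω ≠ 1) :
    Tendsto (fun n => (pos g n ω).length) atTop atTop := by
  refine tendsto_atTop_atTop_of_monotone
    (fun _ _ hmn => (toList_pos_prefix g ω hmn).length_le) fun b => ?_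
  induction b with
  | zero => exact ⟨0, Nat.zero_le _⟩
  | succ b ih =>
    obtain ⟨n, hn⟩ := ih
    obtain ⟨m, hnm, hm⟩ := frequently_atTop.1 hfreq n
    have hlen_m : b ≤ (pos g m ω).length :=
      hn.trans (toList_pos_prefix g ω hnm).length_le
    have hlen_g : (g m ω).length ≠ 0 := mt FreeMonoid.length_eq_zero.1 hm
    refine ⟨m + 1, ?_⟩
    rw [pos_succ, FreeMonoid.length_mul]
    omega

theorem existsUnique_isPrefixOf_of_tendsto_length
    (hlen : Tendsto (fun n => (pos g n ω).length) atTop atTop) :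
    ∃! ξ : ℕ → W, ∀ n, IsPrefixOf (pos g n ω) ξ :=
  existsUnique_limit_of_isPrefix_of_tendsto_length (fun n => (pos g n ω).toList)
    (fun _ _ => toList_pos_prefix g ω) hlen

end Walk

theorem ae_frequently_mem_of_iIndepFun {α Ω : Type*} [MeasurableSpace α] [MeasurableSpace Ω]
    {P : Measure Ω} {μ : Measure α} {X : ℕ → Ω → α} {A : Set α} (hX : ∀ n, Measurable (X n))
    (hindep : iIndepFun X P) (hlaw : ∀ n, P.map (X n) = μ) (hA : MeasurableSet A)
    (hμA : μ A ≠ 0) :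
    ∀ᵐ ω ∂P, ∃ᶠ n in atTop, X n ω ∈ A := by
  have := hindep.isProbabilityMeasure
  have hmeas : ∀ n, MeasurableSet (X n ⁻¹' A) := fun n => hX n hA
  have hprob : ∀ n, P (X n ⁻¹' A) = μ A := fun n => by
    rw [← hlaw n, Measure.map_apply (hX n) hA]
  have hsets : iIndepSet (fun n => X n ⁻¹' A) P :=
    (iIndepSet_iff_meas_biInter hmeas).2 fun S => hindep.meas_biInter fun _ _ => ⟨A, hA, rfl⟩
  have hsum : ∑' n, P (X n ⁻¹' A) = ⊤ := by
    simp_rw [hprob]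
    exact ENNReal.tsum_const_eq_top_of_ne_zero hμA
  filter_upwards [(mem_ae_iff_prob_eq_one (MeasurableSet.measurableSet_limsup hmeas)).2
    (measure_limsup_eq_one hmeas hsets hsum)] with ω hω
  exact mem_limsup_iff_frequently_mem.1 hω

theorem walk_converges_to_unique_infinite_word_general
    {W : Type*}
    (μ : Measure (FreeMonoid W)) [IsProbabilityMeasure μ]
    (he : μ {(1 : FreeMonoid W)} < 1)
    {Ω : Type*} [MeasurableSpace Ω] (P : Measure Ω)
    (g : ℕ → Ω → FreeMonoid W) (hgm : ∀ n, Measurable (g n))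
    (hindep : iIndepFun (m := fun _ => (⊤ : MeasurableSpace (FreeMonoid W))) g P)
    (hlaw : ∀ n, Measure.map (g n) P = μ) :
    ∀ᵐ ω ∂P,
      Tendsto (fun n => FreeMonoid.length (pos g n ω)) atTop atTop ∧
        ∃! ξ : ℕ → W, ∀ n, IsPrefixOf (pos g n ω) ξ := by
  have hne : μ {1}ᶜ ≠ 0 := by
    rw [prob_compl_eq_one_sub (measurableSet_singleton 1)]
    exact (tsub_pos_of_lt he).ne'
  filter_upwards [ae_frequently_mem_of_iIndepFun hgm hindep hlaw
    (measurableSet_singleton 1).compl hne] with ω hω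
  have hlen := tendsto_length_pos_of_frequently_ne_one g ω hω
  exact ⟨hlen, existsUnique_isPrefixOf_of_tendsto_length g ω hlen⟩

/-- Let `μ` be a probability measure on the free monoid on a nonempty countable alphabet with
`μ(e) < 1`.  Then for almost every increment sequence `(g_n)` (i.i.d. with law `μ`), the word
lengths `|x_n|` of the positions `x_n = g_1 ⋯ g_n` tend to infinity, and there is a unique
infinite word `ξ ∈ W^ℕ` of which every `x_n` is a prefix. -/
theorem walk_converges_to_unique_infinite_word
    {W : Type*} [Countable W] [Nonempty W]
    (μ : Measure (FreeMonoid W)) [IsProbabilityMeasure μ]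
    (he : μ {(1 : FreeMonoid W)} < 1)
    {Ω : Type*} [MeasurableSpace Ω] (P : Measure Ω) [IsProbabilityMeasure P]
    (g : ℕ → Ω → FreeMonoid W) (hgm : ∀ n, Measurable (g n))
    (hindep : iIndepFun (m := fun _ => (⊤ : MeasurableSpace (FreeMonoid W))) g P)
    (hlaw : ∀ n, Measure.map (g n) P = μ) :
    ∀ᵐ ω ∂P,
      Tendsto (fun n => FreeMonoid.length (pos g n ω)) atTop atTop ∧
        ∃! ξ : ℕ → W, ∀ n, IsPrefixOf (pos g n ω) ξ :=
  walk_converges_to_unique_infinite_word_general μ he P g hgm hindep hlaw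

end Stmt17
end

section
/- Let Σ be a countable monoid, μ a probability measure on Σ, B a measurable space equipped with a measurable action of Σ, and λ a probability measure on B such that the pushforward g_*λ is absolutely continuous with respect to λ for every g ∈ Σ, and λ is μ-stationary: λ = ∑_{h∈Σ} μ(h) h_*λ. Then for λ-almost every ξ ∈ B and every g ∈ Σ, d(g_*λ)/dλ(ξ) = ∑_{h∈Σ} μ(h) · d((gh)_*λ)/dλ(ξ); that is, for λ-a.e. ξ the function u^ξ(g) := d(g_*λ)/dλ(ξ) is μ-harmonic on Σ. -/
/-!
Stationarity `λ = ∑_h μ(h) h_*λ` pushed forward by `g` gives `g_*λ = ∑_h μ(h) (gh)_*λ`.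
Since every `(gh)_*λ` has density `d((gh)_*λ)/dλ`, the right-hand side is `λ` with density
`∑_h μ(h) d((gh)_*λ)/dλ`, and the density of a measure with respect to the σ-finite `λ` is
unique `λ`-a.e. Countability of the monoid lets the a.e. statements for the various `g` be combined.
-/

open MeasureTheory
open scoped ENNReal

namespace Stmt18

section WeightedSum

variable {ι α : Type*} [Countable ι] [MeasurableSpace α] {ν : ι → Measure α} {lam : Measure α}
  [∀ i, (ν i).HaveLebesgueDecomposition lam]

theorem sum_smul_eq_withDensity_tsum_rnDeriv (hν : ∀ i, ν i ≪ lam) (c : ι → ℝ≥0∞) :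
    Measure.sum (fun i => c i • ν i) = lam.withDensity (∑' i, c i • (ν i).rnDeriv lam) := by
  rw [withDensity_tsum fun i => (Measure.measurable_rnDeriv _ _).const_smul (c i)]
  congr 1
  ext1 i
  rw [withDensity_smul _ (Measure.measurable_rnDeriv _ _),
    Measure.withDensity_rnDeriv_eq _ _ (hν i)]

theorem rnDeriv_sum_smul_ae_eq [SigmaFinite lam] (hν : ∀ i, ν i ≪ lam) (c : ι → ℝ≥0∞) :
    (Measure.sum (fun i => c i • ν i)).rnDeriv lam
      =ᵐ[lam] fun x => ∑' i, c i * (ν i).rnDeriv lam x := by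
  have hdens : Measurable (∑' i, c i • (ν i).rnDeriv lam) :=
    Measurable.tsum' fun i => (Measure.measurable_rnDeriv _ _).const_smul (c i)
  rw [sum_smul_eq_withDensity_tsum_rnDeriv hν c]
  filter_upwards [Measure.rnDeriv_withDensity lam hdens] with x hx
  rw [hx, ENNReal.tsum_apply]
  rfl

end WeightedSum

theorem map_smul_eq_sum_of_stationary {M B : Type*} [Monoid M] [MeasurableSpace M]
    [MeasurableSpace B] [MulAction M B] {μ : Measure M} {lam : Measure B}
    (hact : ∀ m : M, Measurable (fun ξ : B => m • ξ))
    (hstat : lam = Measure.sum (fun h : M => μ {h} • Measure.map (fun ξ : B => h • ξ) lam))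
    (m : M) :
    Measure.map (fun ξ : B => m • ξ) lam
      = Measure.sum (fun h : M => μ {h} • Measure.map (fun ξ : B => (m * h) • ξ) lam) := by
  conv_lhs => rw [hstat]
  rw [Measure.map_sum (hact m).aemeasurable]
  congr 1
  ext1 h
  rw [Measure.map_smul, Measure.map_map (hact m) (hact h)]
  simp only [Function.comp_def, mul_smul]

theorem rnDeriv_stationary_harmonic_general
    {M : Type*} [Monoid M] [Countable M] [MeasurableSpace M]
    (μ : Measure M)
    {B : Type*} [MeasurableSpace B] [MulAction M B]
    (hact : ∀ m : M, Measurable (fun ξ : B => m • ξ))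
    (lam : Measure B) [IsProbabilityMeasure lam]
    (habs : ∀ m : M, Measure.map (fun ξ : B => m • ξ) lam ≪ lam)
    (hstat : lam = Measure.sum (fun h : M => μ {h} • Measure.map (fun ξ : B => h • ξ) lam)) :
    ∀ᵐ ξ ∂lam, ∀ m : M,
      (Measure.map (fun ξ : B => m • ξ) lam).rnDeriv lam ξ
        = ∑' h : M, μ {h} * (Measure.map (fun ξ : B => (m * h) • ξ) lam).rnDeriv lam ξ := by
  rw [ae_all_iff]
  intro m
  rw [map_smul_eq_sum_of_stationary hact hstat m]
  exact rnDeriv_sum_smul_ae_eq (fun h => habs (m * h)) _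

/-- Let `Σ` be a countable monoid acting measurably on a measurable space `B`, `μ` a probability
measure on `Σ`, and `λ` a probability measure on `B` such that `g_*λ ≪ λ` for every `g` and `λ`
is `μ`-stationary: `λ = ∑_h μ(h)·h_*λ`.  Then for `λ`-a.e. `ξ` and every `g`,
`d(g_*λ)/dλ(ξ) = ∑_h μ(h)·d((gh)_*λ)/dλ(ξ)`; that is, the function `u^ξ(g) = d(g_*λ)/dλ(ξ)`
is `μ`-harmonic. -/
theorem rnDeriv_stationary_harmonic
    {M : Type*} [Monoid M] [Countable M] [MeasurableSpace M] [MeasurableSingletonClass M]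
    (μ : Measure M) [IsProbabilityMeasure μ]
    {B : Type*} [MeasurableSpace B] [MulAction M B]
    (hact : ∀ m : M, Measurable (fun ξ : B => m • ξ))
    (lam : Measure B) [IsProbabilityMeasure lam]
    (habs : ∀ m : M, Measure.map (fun ξ : B => m • ξ) lam ≪ lam)
    (hstat : lam = Measure.sum (fun h : M => μ {h} • Measure.map (fun ξ : B => h • ξ) lam)) :
    ∀ᵐ ξ ∂lam, ∀ m : M,
      (Measure.map (fun ξ : B => m • ξ) lam).rnDeriv lam ξ
        = ∑' h : M, μ {h} * (Measure.map (fun ξ : B => (m * h) • ξ) lam).rnDeriv lam ξ :=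
  rnDeriv_stationary_harmonic_general μ hact lam habs hstat

end Stmt18
end

section
/- Let Ω = {0,1}^ℕ with the product measure μ = Bernoulli(1/2)^ℕ. For n ≥ 1 let 𝒜_n be the σ-algebra generated by the coordinate functions x ↦ x_k for k ≥ n, and let ℬ = { Borel B ⊆ Ω : σ(B) = B }, where σ : Ω → Ω is the coordinatewise flip σ(x)_k = 1 - x_k. Then: (i) for every n, the σ-algebra generated by 𝒜_n ∪ ℬ contains the set A = {x : x_0 = 0} (indeed it is the full Borel σ-algebra of Ω); and (ii) no set S in the σ-algebra generated by (⋂_{n≥1} 𝒜_n) ∪ ℬ satisfies μ(S Δ A) = 0. In particular, ⋂_{n≥1} σ(𝒜_n ∪ ℬ) and σ((⋂_{n≥1} 𝒜_n) ∪ ℬ) do not coincide modulo μ-null sets. -/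
open MeasureTheory
open scoped ENNReal symmDiff

namespace Stmt19

/-- The coordinatewise flip `σ(x)_k = 1 - x_k` on `{0,1}^ℕ`. -/
def flipInv : (ℕ → Bool) → (ℕ → Bool) := fun x k => !(x k)

/-- `𝒜 n` is the σ-algebra generated by the coordinate functions `x ↦ x_k` for `k ≥ n`. -/
def 𝒜 (n : ℕ) : MeasurableSpace (ℕ → Bool) :=
  ⨆ k ∈ Set.Ici n, MeasurableSpace.comap (fun x : ℕ → Bool => x k) ⊤

/-- `ℬ` is the σ-algebra of Borel subsets of `{0,1}^ℕ` that are invariant under the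
coordinatewise flip. -/
def ℬ : MeasurableSpace (ℕ → Bool) :=
  MeasurableSpace.generateFrom {S : Set (ℕ → Bool) | MeasurableSet S ∧ flipInv ⁻¹' S = S}

/-- The set `A = {x : x_0 = 0}`. -/
def Aset : Set (ℕ → Bool) := {x | x 0 = false}

lemma measurable_flipInv : Measurable flipInv := by
  unfold flipInv
  exact measurable_pi_iff.mpr fun k => (Measurable.of_discrete (f := Bool.not)).comp (measurable_pi_apply k)

lemma flip_flip : flipInv ∘ flipInv = id := by
  funext x k; simp [flipInv]

-- single coordinate sets
lemma measurable_coord (k : ℕ) (b : Bool) : MeasurableSet {x : ℕ → Bool | x k = b} := by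
  have h : {x : ℕ → Bool | x k = b} = (fun x : ℕ → Bool => x k) ⁻¹' {b} := rfl
  rw [h]
  exact (measurable_pi_apply k) (MeasurableSet.singleton b)

lemma comap_le_pi (k : ℕ) :
    MeasurableSpace.comap (fun x : ℕ → Bool => x k) ⊤ ≤ (inferInstance : MeasurableSpace (ℕ → Bool)) := by
  rintro s ⟨t, -, rfl⟩
  exact (measurable_pi_apply k) (MeasurableSet.of_discrete (s := t))

lemma 𝒜_le (n : ℕ) : 𝒜 n ≤ (inferInstance : MeasurableSpace (ℕ → Bool)) := by
  refine iSup₂_le fun k _ => comap_le_pi k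

lemma ℬ_le : ℬ ≤ (inferInstance : MeasurableSpace (ℕ → Bool)) :=
  MeasurableSpace.generateFrom_le fun s hs => hs.1

-- comap eval_k top is generated by the two coordinate sets, in fact:
lemma comap_eq (k : ℕ) :
    MeasurableSpace.comap (fun x : ℕ → Bool => x k) ⊤
      = MeasurableSpace.generateFrom {{x : ℕ → Bool | x k = false}, {x | x k = true}} := by
  refine le_antisymm ?_ ?_
  · rintro s ⟨t, -, rfl⟩
    classical
    have : (fun x : ℕ → Bool => x k) ⁻¹' t =
        (if false ∈ t then {x : ℕ → Bool | x k = false} else ∅) ∪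
        (if true ∈ t then {x : ℕ → Bool | x k = true} else ∅) := by
      ext x; cases h : x k <;> by_cases hf : false ∈ t <;> by_cases ht : true ∈ t <;>
        simp [h, hf, ht]
    rw [this]
    refine MeasurableSet.union ?_ ?_ <;> split <;>
      first
        | exact @MeasurableSet.empty _ (MeasurableSpace.generateFrom _)
        | exact MeasurableSpace.measurableSet_generateFrom (by simp)
  · refine MeasurableSpace.generateFrom_le ?_
    rintro s (rfl | rfl)
    · exact ⟨{false}, trivial, rfl⟩
    · exact ⟨{true}, trivial, rfl⟩


lemma eqset_mem_B (k n : ℕ) : MeasurableSet[ℬ] {x : ℕ → Bool | x k = x n} := by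
  refine MeasurableSpace.measurableSet_generateFrom ⟨?_, ?_⟩
  · have : {x : ℕ → Bool | x k = x n} =
        ({x | x k = true} ∩ {x | x n = true}) ∪ ({x | x k = false} ∩ {x | x n = false}) := by
      ext x; cases h : x k <;> cases h' : x n <;> simp [h, h']
    rw [this]
    exact ((measurable_coord k true).inter (measurable_coord n true)).union
      ((measurable_coord k false).inter (measurable_coord n false))
  · ext x; simp [flipInv]

lemma coord_mem_A (n k : ℕ) (hk : n ≤ k) (b : Bool) :
    MeasurableSet[𝒜 n] {x : ℕ → Bool | x k = b} := by
  have h1 : MeasurableSpace.comap (fun x : ℕ → Bool => x k) ⊤ ≤ 𝒜 n := by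
    have := le_iSup₂ (f := fun (j : ℕ) (_ : j ∈ Set.Ici n) =>
      MeasurableSpace.comap (fun x : ℕ → Bool => x k) ⊤)
    exact le_iSup₂ (f := fun (j : ℕ) (_ : j ∈ Set.Ici n) =>
      MeasurableSpace.comap (fun x : ℕ → Bool => x j) ⊤) k hk
  exact h1 _ ⟨{b}, trivial, rfl⟩

lemma join_eq_top (n : ℕ) (hn : 1 ≤ n) :
    (𝒜 n ⊔ ℬ) = (inferInstance : MeasurableSpace (ℕ → Bool)) := by
  refine le_antisymm (sup_le (𝒜_le n) ℬ_le) ?_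
  have hpi : (inferInstance : MeasurableSpace (ℕ → Bool)) =
      ⨆ k, MeasurableSpace.comap (fun x : ℕ → Bool => x k) ⊤ := rfl
  rw [hpi]
  refine iSup_le fun k => ?_
  rw [comap_eq k]
  refine MeasurableSpace.generateFrom_le ?_
  have key : ∀ b : Bool, MeasurableSet[𝒜 n ⊔ ℬ] {x : ℕ → Bool | x k = b} := by
    intro b
    rcases le_or_gt n k with h | h
    · exact le_sup_left (α := MeasurableSpace (ℕ → Bool)) _ (coord_mem_A n k h b)
    · have hE : MeasurableSet[𝒜 n ⊔ ℬ] {x : ℕ → Bool | x k = x n} :=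
        le_sup_right (α := MeasurableSpace (ℕ → Bool)) _ (eqset_mem_B k n)
      have hF : MeasurableSet[𝒜 n ⊔ ℬ] {x : ℕ → Bool | x n = b} :=
        le_sup_left (α := MeasurableSpace (ℕ → Bool)) _ (coord_mem_A n n le_rfl b)
      have hset : {x : ℕ → Bool | x k = b} =
          ({x | x k = x n} ∩ {x | x n = b}) ∪ ({x | x k = x n}ᶜ ∩ {x | x n = b}ᶜ) := by
        ext x; cases hb : x n <;> cases b <;> simp [hb]
      rw [hset]
      exact (hE.inter hF).union (hE.compl.inter hF.compl)
  rintro s (rfl | rfl)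
  · exact key false
  · exact key true


def Cyl : Set (Set (ℕ → Bool)) :=
  {C | ∃ (s : Finset ℕ) (f : ℕ → Bool), C = {x | ∀ i ∈ s, x i = f i}}

lemma cyl_measurable {C : Set (ℕ → Bool)} (hC : C ∈ Cyl) : MeasurableSet C := by
  obtain ⟨s, f, rfl⟩ := hC
  have : {x : ℕ → Bool | ∀ i ∈ s, x i = f i} = ⋂ i ∈ s, {x | x i = f i} := by
    ext x; simp
  rw [this]
  exact MeasurableSet.biInter s.countable_toSet fun i _ => measurable_coord i (f i)

lemma isPiSystem_cyl : IsPiSystem Cyl := by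
  rintro C ⟨s, f, rfl⟩ D ⟨t, g, rfl⟩ hne
  classical
  refine ⟨s ∪ t, fun i => if i ∈ s then f i else g i, ?_⟩
  obtain ⟨y, hy1, hy2⟩ := hne
  ext x
  simp only [Set.mem_inter_iff, Set.mem_setOf_eq, Finset.mem_union]
  constructor
  · rintro ⟨h1, h2⟩ i hi
    by_cases his : i ∈ s
    · simp [his, h1 i his]
    · rcases hi with hi | hi
      · exact absurd hi his
      · simp [his, h2 i hi]
  · intro h
    refine ⟨fun i hi => by simpa [hi] using h i (Or.inl hi), fun i hi => ?_⟩
    by_cases his : i ∈ s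
    · have := h i (Or.inl his)
      simp only [his, if_true] at this
      rw [this]
      -- need f i = g i : from y being in both
      rw [← hy1 i his, hy2 i hi]
    · simpa [his] using h i (Or.inr hi)

lemma generateFrom_cyl :
    MeasurableSpace.generateFrom Cyl = (inferInstance : MeasurableSpace (ℕ → Bool)) := by
  refine le_antisymm (MeasurableSpace.generateFrom_le fun C hC => cyl_measurable hC) ?_
  have hpi : (inferInstance : MeasurableSpace (ℕ → Bool)) =
      ⨆ k, MeasurableSpace.comap (fun x : ℕ → Bool => x k) ⊤ := rfl
  rw [hpi]
  refine iSup_le fun k => ?_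
  rw [comap_eq k]
  refine MeasurableSpace.generateFrom_le ?_
  rintro s (rfl | rfl)
  · refine MeasurableSpace.measurableSet_generateFrom ⟨{k}, fun _ => false, ?_⟩
    ext x; simp
  · refine MeasurableSpace.measurableSet_generateFrom ⟨{k}, fun _ => true, ?_⟩
    ext x; simp

lemma map_flip_eq (P : Measure (ℕ → Bool)) [IsProbabilityMeasure P]
    (hP : ∀ (s : Finset ℕ) (f : ℕ → Bool),
      P {x | ∀ i ∈ s, x i = f i} = (1 / 2 : ℝ≥0∞) ^ s.card) :
    P.map flipInv = P := by
  have : IsProbabilityMeasure (P.map flipInv) := Measure.isProbabilityMeasure_map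
    measurable_flipInv.aemeasurable
  refine MeasureTheory.ext_of_generate_finite Cyl generateFrom_cyl.symm isPiSystem_cyl ?_ ?_
  · rintro C ⟨s, f, rfl⟩
    rw [Measure.map_apply measurable_flipInv (cyl_measurable ⟨s, f, rfl⟩)]
    have : flipInv ⁻¹' {x | ∀ i ∈ s, x i = f i} = {x | ∀ i ∈ s, x i = !(f i)} := by
      ext x
      simp only [Set.mem_preimage, Set.mem_setOf_eq, flipInv]
      constructor <;> intro h i hi
      · have := h i hi; cases hx : x i <;> simp [hx] at this ⊢ <;> simp [← this]
      · rw [h i hi]; simp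
    rw [this, hP s (fun i => !(f i)), hP s f]
  · simp

lemma flip_preimage_measure (P : Measure (ℕ → Bool)) [IsProbabilityMeasure P]
    (hP : ∀ (s : Finset ℕ) (f : ℕ → Bool),
      P {x | ∀ i ∈ s, x i = f i} = (1 / 2 : ℝ≥0∞) ^ s.card)
    {S : Set (ℕ → Bool)} (hS : MeasurableSet S) : P (flipInv ⁻¹' S) = P S := by
  conv_rhs => rw [← map_flip_eq P hP]
  rw [Measure.map_apply measurable_flipInv hS]


def coordSA (k : ℕ) : MeasurableSpace (ℕ → Bool) :=
  MeasurableSpace.comap (fun x : ℕ → Bool => x k) ⊤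

def coordPi (k : ℕ) : Set (Set (ℕ → Bool)) :=
  {{x : ℕ → Bool | x k = false}, {x | x k = true}}

lemma single_measure (P : Measure (ℕ → Bool))
    (hP : ∀ (s : Finset ℕ) (f : ℕ → Bool),
      P {x | ∀ i ∈ s, x i = f i} = (1 / 2 : ℝ≥0∞) ^ s.card)
    (k : ℕ) (b : Bool) : P {x : ℕ → Bool | x k = b} = 1 / 2 := by
  have h := hP {k} (fun _ => b)
  simpa using h

lemma indep_coords (P : Measure (ℕ → Bool)) [IsProbabilityMeasure P]
    (hP : ∀ (s : Finset ℕ) (f : ℕ → Bool),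
      P {x | ∀ i ∈ s, x i = f i} = (1 / 2 : ℝ≥0∞) ^ s.card) :
    ProbabilityTheory.iIndep coordSA P := by
  refine ProbabilityTheory.iIndepSets.iIndep (m := coordSA) (fun k => comap_le_pi k) coordPi
    (fun k => ?_) (fun k => comap_eq k) ?_
  · rintro C (rfl | rfl) D (rfl | rfl) hne
    · exact Or.inl (Set.inter_self _)
    · exfalso
      obtain ⟨y, hy1, hy2⟩ := hne
      simp only [Set.mem_setOf_eq] at hy1 hy2
      rw [hy1] at hy2
      exact Bool.false_ne_true hy2
    · exfalso
      obtain ⟨y, hy1, hy2⟩ := hne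
      simp only [Set.mem_setOf_eq] at hy1 hy2
      rw [hy1] at hy2
      exact Bool.false_ne_true hy2.symm
    · exact Or.inr (Set.inter_self _)
  · rw [ProbabilityTheory.iIndepSets_iff]
    intro s f hf
    classical
    have hex : ∀ i ∈ s, ∃ c : Bool, f i = {x : ℕ → Bool | x i = c} := by
      intro i hi
      rcases hf i hi with h | h
      · exact ⟨false, h⟩
      · exact ⟨true, h⟩
    choose b hb using hex
    set g : ℕ → Bool := fun i => if hi : i ∈ s then b i hi else false with hg
    have hinter : (⋂ i ∈ s, f i) = {x : ℕ → Bool | ∀ i ∈ s, x i = g i} := by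
      ext x
      simp only [Set.mem_iInter, Set.mem_setOf_eq]
      refine forall₂_congr fun i hi => ?_
      rw [hb i hi]
      simp [hg, hi]
    rw [hinter, hP s g]
    have : ∀ i ∈ s, P (f i) = 1 / 2 := fun i hi => by
      rw [hb i hi]; exact single_measure P hP i (b i hi)
    rw [Finset.prod_congr rfl this, Finset.prod_const]

lemma tail_le_limsup : (⨅ n ∈ Set.Ici 1, 𝒜 n) ≤ Filter.limsup coordSA Filter.atTop := by
  rw [Filter.limsup_eq_iInf_iSup_of_nat]
  refine le_iInf fun n => ?_
  refine le_trans (iInf₂_le (n + 1) (by simp)) ?_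
  -- 𝒜 (n+1) ≤ ⨆ i ≥ n, coordSA i
  refine iSup₂_le fun k hk => ?_
  have hk' : n ≤ k := le_trans (Nat.le_succ n) hk
  exact le_iSup₂ (f := fun (i : ℕ) (_ : i ≥ n) => coordSA i) k hk'

lemma tail_zero_one (P : Measure (ℕ → Bool)) [IsProbabilityMeasure P]
    (hP : ∀ (s : Finset ℕ) (f : ℕ → Bool),
      P {x | ∀ i ∈ s, x i = f i} = (1 / 2 : ℝ≥0∞) ^ s.card)
    {T : Set (ℕ → Bool)} (hT : MeasurableSet[⨅ n ∈ Set.Ici 1, 𝒜 n] T) :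
    P T = 0 ∨ P T = 1 :=
  ProbabilityTheory.measure_zero_or_one_of_measurableSet_limsup_atTop
    (fun k => comap_le_pi k) (indep_coords P hP) (tail_le_limsup T hT)


/-- The σ-algebra of Borel sets that are `P`-a.e. flip-invariant. -/
def mC (P : Measure (ℕ → Bool)) : MeasurableSpace (ℕ → Bool) where
  MeasurableSet' S := MeasurableSet S ∧ P (S ∆ (flipInv ⁻¹' S)) = 0
  measurableSet_empty := ⟨MeasurableSet.empty, by simp⟩
  measurableSet_compl := by
    rintro S ⟨hS, hS0⟩
    refine ⟨hS.compl, ?_⟩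
    rw [Set.preimage_compl, compl_symmDiff_compl]
    exact hS0
  measurableSet_iUnion := by
    rintro f hf
    refine ⟨MeasurableSet.iUnion fun i => (hf i).1, ?_⟩
    refine measure_mono_null ?_ (measure_iUnion_null fun i => (hf i).2)
    intro x hx
    rw [Set.mem_symmDiff] at hx
    rcases hx with ⟨hx1, hx2⟩ | ⟨hx1, hx2⟩
    · obtain ⟨i, hi⟩ := Set.mem_iUnion.1 hx1
      refine Set.mem_iUnion.2 ⟨i, Set.mem_symmDiff.2 (Or.inl ⟨hi, fun h => hx2 ?_⟩)⟩
      rw [Set.preimage_iUnion]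
      exact Set.mem_iUnion.2 ⟨i, h⟩
    · rw [Set.preimage_iUnion] at hx1
      obtain ⟨i, hi⟩ := Set.mem_iUnion.1 hx1
      exact Set.mem_iUnion.2 ⟨i, Set.mem_symmDiff.2 (Or.inr ⟨hi, fun h => hx2 (Set.mem_iUnion.2 ⟨i, h⟩)⟩)⟩

lemma tail_join_le_mC (P : Measure (ℕ → Bool)) [IsProbabilityMeasure P]
    (hP : ∀ (s : Finset ℕ) (f : ℕ → Bool),
      P {x | ∀ i ∈ s, x i = f i} = (1 / 2 : ℝ≥0∞) ^ s.card) :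
    ((⨅ n ∈ Set.Ici 1, 𝒜 n) ⊔ ℬ) ≤ mC P := by
  refine sup_le ?_ ?_
  · intro T hT
    have hTm : MeasurableSet T := by
      have h1 : (⨅ n ∈ Set.Ici 1, 𝒜 n) ≤ (inferInstance : MeasurableSpace (ℕ → Bool)) :=
        le_trans (iInf₂_le 1 (by simp)) (𝒜_le 1)
      exact h1 T hT
    refine ⟨hTm, ?_⟩
    have hpre : P (flipInv ⁻¹' T) = P T := flip_preimage_measure P hP hTm
    rcases tail_zero_one P hP hT with h0 | h1
    · refine measure_mono_null (fun x hx => ?_) (measure_union_null h0 (hpre.trans h0))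
      rw [Set.mem_symmDiff] at hx
      rcases hx with ⟨h, _⟩ | ⟨h, _⟩
      · exact Or.inl h
      · exact Or.inr h
    · have hc : P Tᶜ = 0 := by
        rw [measure_compl hTm (measure_ne_top P T), h1, measure_univ, tsub_self]
      have hc' : P (flipInv ⁻¹' T)ᶜ = 0 := by
        rw [← Set.preimage_compl, flip_preimage_measure P hP hTm.compl]
        exact hc
      refine measure_mono_null (fun x hx => ?_) (measure_union_null hc hc')
      rw [Set.mem_symmDiff] at hx
      rcases hx with ⟨_, h⟩ | ⟨_, h⟩
      · exact Or.inr h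
      · exact Or.inl h
  · refine MeasurableSpace.generateFrom_le fun s hs => ⟨hs.1, ?_⟩
    rw [hs.2]
    simp

lemma measurable_Aset : MeasurableSet Aset := measurable_coord 0 false

lemma preimage_Aset : flipInv ⁻¹' Aset = Asetᶜ := by
  ext x
  simp [flipInv, Aset]

lemma no_approx (P : Measure (ℕ → Bool)) [IsProbabilityMeasure P]
    (hP : ∀ (s : Finset ℕ) (f : ℕ → Bool),
      P {x | ∀ i ∈ s, x i = f i} = (1 / 2 : ℝ≥0∞) ^ s.card) :
    ¬ ∃ S : Set (ℕ → Bool),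
      MeasurableSet[(⨅ n ∈ Set.Ici 1, 𝒜 n) ⊔ ℬ] S ∧ P (S ∆ Aset) = 0 := by
  rintro ⟨S, hS, hnull⟩
  obtain ⟨hSm, hSflip⟩ := tail_join_le_mC P hP S hS
  have h2 : P ((flipInv ⁻¹' S) ∆ Asetᶜ) = 0 := by
    have : (flipInv ⁻¹' S) ∆ Asetᶜ = flipInv ⁻¹' (S ∆ Aset) := by
      rw [← preimage_Aset]
      ext x
      simp only [Set.mem_symmDiff, Set.mem_preimage]
    rw [this, flip_preimage_measure P hP (hSm.symmDiff measurable_Aset)]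
    exact hnull
  have h1 : P (Aset ∆ S) = 0 := by rwa [symmDiff_comm]
  have htri : Aset ∆ Asetᶜ ⊆ (Aset ∆ S) ∪ ((S ∆ (flipInv ⁻¹' S)) ∪ ((flipInv ⁻¹' S) ∆ Asetᶜ)) := by
    refine le_trans (symmDiff_triangle Aset S Asetᶜ) ?_
    exact Set.union_subset_union_right _ (symmDiff_triangle S (flipInv ⁻¹' S) Asetᶜ)
  have hzero : P (Aset ∆ Asetᶜ) = 0 :=
    measure_mono_null htri (measure_union_null h1 (measure_union_null hSflip h2))
  have : Aset ∆ Asetᶜ = Set.univ := by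
    rw [Set.symmDiff_def]
    ext x
    by_cases h : x ∈ Aset <;> simp [h]
  rw [this, measure_univ] at hzero
  exact one_ne_zero hzero

/-- On `Ω = {0,1}^ℕ` with the fair-coin product measure `P`:
(i) for every `n ≥ 1` the σ-algebra generated by `𝒜_n ∪ ℬ` is the full Borel σ-algebra, and in
particular contains `A = {x : x_0 = 0}`;
(ii) no set in the σ-algebra generated by `(⋂_{n≥1} 𝒜_n) ∪ ℬ` agrees with `A` up to a `P`-null
symmetric difference;
and in particular `⋂_{n≥1} σ(𝒜_n ∪ ℬ)` and `σ((⋂_{n≥1} 𝒜_n) ∪ ℬ)` do not coincide modulo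
`P`-null sets. -/
theorem tail_join_counterexample
    (P : Measure (ℕ → Bool)) [IsProbabilityMeasure P]
    (hP : ∀ (s : Finset ℕ) (f : ℕ → Bool),
      P {x | ∀ i ∈ s, x i = f i} = (1 / 2 : ℝ≥0∞) ^ s.card) :
    (∀ n : ℕ, 1 ≤ n →
      (𝒜 n ⊔ ℬ) = (inferInstance : MeasurableSpace (ℕ → Bool)) ∧
        MeasurableSet[𝒜 n ⊔ ℬ] Aset) ∧
    (¬ ∃ S : Set (ℕ → Bool),
      MeasurableSet[(⨅ n ∈ Set.Ici 1, 𝒜 n) ⊔ ℬ] S ∧ P (S ∆ Aset) = 0) ∧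
    (¬ ∀ S : Set (ℕ → Bool),
      MeasurableSet[⨅ n ∈ Set.Ici 1, (𝒜 n ⊔ ℬ)] S →
        ∃ S' : Set (ℕ → Bool),
          MeasurableSet[(⨅ n ∈ Set.Ici 1, 𝒜 n) ⊔ ℬ] S' ∧ P (S ∆ S') = 0) := by
  refine ⟨fun n hn => ⟨join_eq_top n hn, ?_⟩, no_approx P hP, ?_⟩
  · rw [join_eq_top n hn]
    exact measurable_Aset
  · intro hall
    have hA : MeasurableSet[⨅ n ∈ Set.Ici 1, (𝒜 n ⊔ ℬ)] Aset := by
      rw [MeasurableSpace.measurableSet_iInf]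
      intro n
      rw [MeasurableSpace.measurableSet_iInf]
      intro hn
      rw [join_eq_top n hn]
      exact measurable_Aset
    obtain ⟨S', hS', hnull⟩ := hall Aset hA
    exact no_approx P hP ⟨S', hS', by rwa [symmDiff_comm]⟩


end Stmt19
end
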